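/- arXiv:2103.11003 — 12 statements merged into one kernel-verified Lean document; each statement's English description precedes it below -/
import Mathlib

section
/- Let p ≥ 1, θ₀ ∈ ℝ^p, r > 0, τ₁ > 0. Let L : ℝ^p → ℝ be a differentiable convex function that is locally τ₁-strongly convex on the ball B_r(θ₀), and let θ̂ be a global minimizer of L with ‖θ̂ − θ₀‖₂ ≤ r/2. Then every θ ∈ ℝ^p with L(θ) − L(θ̂) ≤ τ₁ r²/4 satisfies ‖θ − θ̂‖₂ ≤ r/2, and consequently ‖θ − θ₀‖₂ ≤ r. -/
open scoped RealInnerProductSpace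

/-! A minimizer `θ̂` is a critical point, so local strong convexity makes `L` grow by at least
`τ₁ (r/2)²` on the sphere of radius `r/2` about `θ̂`, which lies in `B_r(θ₀)`. By convexity, the
gap `L - L θ̂` at a point beyond that sphere dominates the gap at the point where the segment from
`θ̂` crosses it, times a factor `> 1`; hence no such point has gap `≤ τ₁ r² / 4`. -/

theorem IsLocalMin.gradient_eq_zero {E : Type*} [NormedAddCommGroup E] [InnerProductSpace ℝ E]
    [CompleteSpace E] {f : E → ℝ} {a : E} (h : IsLocalMin f a) : gradient f a = 0 := by
  simp [gradient, h.fderiv_eq_zero]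

theorem ConvexOn.norm_sub_le_of_forall_sphere_le {E : Type*} [NormedAddCommGroup E]
    [NormedSpace ℝ E] {s : Set E} {f : E → ℝ} (hf : ConvexOn ℝ s f) {x₀ x : E} (hx₀ : x₀ ∈ s)
    (hx : x ∈ s) {ρ c : ℝ} (hρ : 0 ≤ ρ) (hc : 0 < c)
    (hsphere : ∀ y ∈ s, ‖y - x₀‖ = ρ → c ≤ f y - f x₀) (hgap : f x - f x₀ ≤ c) :
    ‖x - x₀‖ ≤ ρ := by
  by_contra! hfar
  have hd : 0 < ‖x - x₀‖ := hρ.trans_lt hfar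
  set t := ρ / ‖x - x₀‖ with ht
  have ht₀ : 0 ≤ t := div_nonneg hρ hd.le
  have ht₁ : t < 1 := (div_lt_one hd).mpr hfar
  have hy : (1 - t) • x₀ + t • x - x₀ = t • (x - x₀) := by module
  have hy_sphere : ‖(1 - t) • x₀ + t • x - x₀‖ = ρ := by
    rw [hy, norm_smul, Real.norm_of_nonneg ht₀, ht, div_mul_cancel₀ _ hd.ne']
  have hlow := hsphere _ (hf.1 hx₀ hx (by linarith) ht₀ (by ring)) hy_sphere
  have hup : f ((1 - t) • x₀ + t • x) ≤ (1 - t) * f x₀ + t * f x :=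
    hf.2 hx₀ hx (by linarith) ht₀ (by ring)
  have hshrink : t * (f x - f x₀) < c := by
    rcases le_or_gt (f x - f x₀) 0 with hneg | hpos
    · nlinarith
    · nlinarith
  linarith

theorem stmt_0_general {p : ℕ} (θ₀ : EuclideanSpace ℝ (Fin p)) (r τ₁ : ℝ)
    (hr : 0 < r) (hτ₁ : 0 < τ₁)
    (L : EuclideanSpace ℝ (Fin p) → ℝ)
    (hconv : ConvexOn ℝ Set.univ L)
    (hlsc : ∀ θ₁ θ₂ : EuclideanSpace ℝ (Fin p), ‖θ₁ - θ₀‖ ≤ r → ‖θ₂ - θ₀‖ ≤ r →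
      L θ₁ - L θ₂ ≥ ⟪gradient L θ₂, θ₁ - θ₂⟫ + τ₁ * ‖θ₁ - θ₂‖ ^ 2)
    (θhat : EuclideanSpace ℝ (Fin p)) (hmin : ∀ θ, L θhat ≤ L θ)
    (hclose : ‖θhat - θ₀‖ ≤ r / 2)
    (θ : EuclideanSpace ℝ (Fin p)) (hθ : L θ - L θhat ≤ τ₁ * r ^ 2 / 4) :
    ‖θ - θhat‖ ≤ r / 2 ∧ ‖θ - θ₀‖ ≤ r := by
  have hcrit : gradient L θhat = 0 :=
    ((isMinOn_univ_iff.mpr hmin).isLocalMin Filter.univ_mem).gradient_eq_zero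
  have hsphere : ∀ y ∈ Set.univ, ‖y - θhat‖ = r / 2 → τ₁ * r ^ 2 / 4 ≤ L y - L θhat := by
    intro y _ hy
    have hy_ball : ‖y - θ₀‖ ≤ r := by
      linarith [norm_sub_le_norm_sub_add_norm_sub y θhat θ₀]
    have := hlsc y θhat hy_ball (by linarith)
    rw [hcrit, inner_zero_left, hy] at this
    linarith
  have hnear : ‖θ - θhat‖ ≤ r / 2 :=
    hconv.norm_sub_le_of_forall_sphere_le (Set.mem_univ _) (Set.mem_univ _) (by positivity)
      (by positivity) hsphere hθ
  exact ⟨hnear, by linarith [norm_sub_le_norm_sub_add_norm_sub θ θhat θ₀]⟩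

/-- if `L` is convex, differentiable, locally `τ₁`-strongly convex on the ball of
radius `r` around `θ₀`, and its global minimizer `θ̂` satisfies `‖θ̂ - θ₀‖ ≤ r/2`, then any `θ`
with suboptimality gap at most `τ₁ r² / 4` satisfies `‖θ - θ̂‖ ≤ r/2` and `‖θ - θ₀‖ ≤ r`. -/
theorem stmt_0 {p : ℕ} (hp : 1 ≤ p) (θ₀ : EuclideanSpace ℝ (Fin p)) (r τ₁ : ℝ)
    (hr : 0 < r) (hτ₁ : 0 < τ₁)
    (L : EuclideanSpace ℝ (Fin p) → ℝ) (hdiff : Differentiable ℝ L)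
    (hconv : ConvexOn ℝ Set.univ L)
    (hlsc : ∀ θ₁ θ₂ : EuclideanSpace ℝ (Fin p), ‖θ₁ - θ₀‖ ≤ r → ‖θ₂ - θ₀‖ ≤ r →
      L θ₁ - L θ₂ ≥ ⟪gradient L θ₂, θ₁ - θ₂⟫ + τ₁ * ‖θ₁ - θ₂‖ ^ 2)
    (θhat : EuclideanSpace ℝ (Fin p)) (hmin : ∀ θ, L θhat ≤ L θ)
    (hclose : ‖θhat - θ₀‖ ≤ r / 2)
    (θ : EuclideanSpace ℝ (Fin p)) (hθ : L θ - L θhat ≤ τ₁ * r ^ 2 / 4) :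
    ‖θ - θhat‖ ≤ r / 2 ∧ ‖θ - θ₀‖ ≤ r :=
  stmt_0_general θ₀ r τ₁ hr hτ₁ L hconv hlsc θhat hmin hclose θ hθ
end

section
/- Let L : ℝ^p → ℝ be differentiable, convex, and τ₂-smooth with ‖∇L(θ)‖₂ ≤ B for all θ ∈ ℝ^p, let θ̂ be a global minimizer of L, and let 0 < η ≤ 1/(2τ₂). Let K₀ ≥ 1 be an integer and let θ^{(0)}, …, θ^{(K₀)} be noisy gradient descent iterates with ‖N_k‖₂ ≤ ε for all k < K₀. Set R = ‖θ^{(0)} − θ̂‖₂ and C' = 2ηR + 2η²(B+1), and assume (K₀C' + 2(K₀−1)η)ε ≤ 1. Then L(θ^{(K₀)}) − L(θ̂) ≤ R²/(2ηK₀) + (R+1)ε + (2ηB + ηε/2)(K₀+1)ε. -/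
/-!
For a convex `τ`-smooth `L` and `τ η ≤ 1/2`, one exact gradient step
`φ = x - η ∇L(x)` decreases `L` by `η/2 ‖∇L(x)‖²`, and combining this with the gradient
inequality of convexity gives `‖φ - θ̂‖² + 2η (L φ - L θ̂) ≤ ‖x - θ̂‖²`. The noise `η N_k`
moves the iterate by at most `ηε` and, by smoothness, raises `L` by at most `ηBε + ηε²/2`.
Hence the potential `‖θ_k - θ̂‖²` drops at each step by `2η (L θ_{k+1} - L θ̂)` up to noise
terms, while `L θ_K` exceeds each `L θ_{k+1}` by at most `K - 1` noise increments; summing over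
`K` steps bounds `2ηK (L θ_K - L θ̂)` by `R²` plus noise terms, and the smallness assumption,
through its consequence `2(K - 1)ηε ≤ 1`, absorbs the terms quadratic in `ε`.
-/
open scoped RealInnerProductSpace
open Set

theorem le_add_mul_of_forall_succ_le {u : ℕ → ℝ} {d : ℝ} {n : ℕ}
    (h : ∀ k < n, u (k + 1) ≤ u k + d) {j m : ℕ} (hjm : j ≤ m) (hmn : m ≤ n) :
    u m ≤ u j + (m - j) * d := by
  induction m, hjm using Nat.le_induction with
  | base => simp
  | succ m _ ih =>
    have hstep := h m hmn
    have hm := ih (by omega)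
    push_cast
    linarith

theorem norm_add_smul_sub_le {E : Type*} [SeminormedAddCommGroup E] [NormedSpace ℝ E]
    {η ε : ℝ} (hη : 0 ≤ η) {n : E} (hn : ‖n‖ ≤ ε) (z y : E) :
    ‖z + η • n - y‖ ≤ ‖z - y‖ + η * ε := by
  calc ‖z + η • n - y‖ = ‖(z - y) + η • n‖ := by rw [add_sub_right_comm]
    _ ≤ ‖z - y‖ + ‖η • n‖ := norm_add_le _ _
    _ = ‖z - y‖ + η * ‖n‖ := by rw [norm_smul, Real.norm_of_nonneg hη]
    _ ≤ ‖z - y‖ + η * ε := by gcongr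

variable {F : Type*} [NormedAddCommGroup F] [InnerProductSpace ℝ F] [CompleteSpace F]

theorem ConvexOn.inner_gradient_le_sub {L : F → ℝ} (hconv : ConvexOn ℝ univ L) {x : F}
    (hdiff : DifferentiableAt ℝ L x) (y : F) : ⟪gradient L x, y - x⟫ ≤ L y - L x := by
  have hline : ConvexOn ℝ univ (L ∘ AffineMap.lineMap (k := ℝ) x y) := by
    simpa using hconv.comp_affineMap (AffineMap.lineMap (k := ℝ) x y)
  have hderiv : HasDerivAt (L ∘ AffineMap.lineMap (k := ℝ) x y) ⟪gradient L x, y - x⟫ 0 := by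
    have hL : HasFDerivAt L (InnerProductSpace.toDual ℝ F (gradient L x))
        (AffineMap.lineMap (k := ℝ) x y 0) := by
      simpa using hdiff.hasGradientAt.hasFDerivAt
    simpa using hL.comp_hasDerivAt (0 : ℝ) AffineMap.hasDerivAt_lineMap
  simpa [slope_def_field] using
    hline.le_slope_of_hasDerivAt (mem_univ 0) (mem_univ 1) one_pos hderiv

def IsSmoothWith (τ : ℝ) (L : F → ℝ) : Prop :=
  ∀ x y : F, L x - L y ≤ ⟪gradient L y, x - y⟫ + τ * ‖x - y‖ ^ 2

namespace IsSmoothWith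

variable {L : F → ℝ} {τ η B ε : ℝ}

theorem apply_add_smul_le (hL : IsSmoothWith τ L) (hη : 0 ≤ η) (hτη : τ * η ≤ 1 / 2)
    (x v : F) : L (x + η • v) ≤ L x + η * ⟪gradient L x, v⟫ + η / 2 * ‖v‖ ^ 2 := by
  have h := hL (x + η • v) x
  rw [add_sub_cancel_left, inner_smul_right, norm_smul, Real.norm_of_nonneg hη] at h
  nlinarith [mul_nonneg hη (sq_nonneg ‖v‖)]

theorem apply_sub_smul_gradient_le (hL : IsSmoothWith τ L) (hη : 0 ≤ η)
    (hτη : τ * η ≤ 1 / 2) (x : F) :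
    L (x - η • gradient L x) ≤ L x - η / 2 * ‖gradient L x‖ ^ 2 := by
  have h := hL.apply_add_smul_le hη hτη x (-gradient L x)
  rw [smul_neg, ← sub_eq_add_neg, inner_neg_right, real_inner_self_eq_norm_sq, norm_neg] at h
  linarith

theorem apply_add_smul_le_of_norm_le (hL : IsSmoothWith τ L) (hη : 0 ≤ η)
    (hτη : τ * η ≤ 1 / 2) (hgrad : ∀ x, ‖gradient L x‖ ≤ B) (hB : 0 ≤ B) {n : F}
    (hn : ‖n‖ ≤ ε) (x : F) : L (x + η • n) ≤ L x + (η * B * ε + η / 2 * ε ^ 2) := by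
  have hinner : ⟪gradient L x, n⟫ ≤ B * ε :=
    (real_inner_le_norm _ _).trans (mul_le_mul (hgrad x) hn (norm_nonneg n) hB)
  have hsq : ‖n‖ ^ 2 ≤ ε ^ 2 := pow_le_pow_left₀ (norm_nonneg n) hn 2
  have h := hL.apply_add_smul_le hη hτη x n
  nlinarith

theorem sq_dist_sub_smul_gradient_le (hL : IsSmoothWith τ L) (hconv : ConvexOn ℝ univ L)
    (hη : 0 ≤ η) (hτη : τ * η ≤ 1 / 2) {x : F} (hdiff : DifferentiableAt ℝ L x) (y : F) :
    ‖x - η • gradient L x - y‖ ^ 2 + 2 * η * (L (x - η • gradient L x) - L y) ≤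
      ‖x - y‖ ^ 2 := by
  set g := gradient L x
  have hexpand : ‖x - η • g - y‖ ^ 2 = ‖x - y‖ ^ 2 - 2 * η * ⟪g, x - y⟫ + η ^ 2 * ‖g‖ ^ 2 := by
    rw [sub_right_comm, norm_sub_sq_real, inner_smul_right, real_inner_comm, norm_smul,
      Real.norm_of_nonneg hη]
    ring
  have hconvex : L x - L y ≤ ⟪g, x - y⟫ := by
    have := hconv.inner_gradient_le_sub hdiff y
    rw [← neg_sub x y, inner_neg_right] at this
    linarith
  have hdescent := hL.apply_sub_smul_gradient_le hη hτη x
  nlinarith [mul_le_mul_of_nonneg_left hconvex hη]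

theorem norm_sub_smul_gradient_sub_le (hL : IsSmoothWith τ L) (hconv : ConvexOn ℝ univ L)
    (hη : 0 ≤ η) (hτη : τ * η ≤ 1 / 2) {x : F} (hdiff : DifferentiableAt ℝ L x) {y : F}
    (hy : L y ≤ L (x - η • gradient L x)) : ‖x - η • gradient L x - y‖ ≤ ‖x - y‖ := by
  have h := hL.sq_dist_sub_smul_gradient_le hconv hη hτη hdiff y
  rw [← pow_le_pow_iff_left₀ (norm_nonneg _) (norm_nonneg _) two_ne_zero]
  nlinarith

theorem apply_noisy_step_le (hL : IsSmoothWith τ L) (hη : 0 ≤ η) (hτη : τ * η ≤ 1 / 2)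
    (hgrad : ∀ x, ‖gradient L x‖ ≤ B) (hB : 0 ≤ B) {n : F} (hn : ‖n‖ ≤ ε) (x : F) :
    L (x - η • gradient L x + η • n) ≤ L x + (η * B * ε + η / 2 * ε ^ 2) := by
  have hperturb := hL.apply_add_smul_le_of_norm_le hη hτη hgrad hB hn (x - η • gradient L x)
  have hdescent := hL.apply_sub_smul_gradient_le hη hτη x
  nlinarith [mul_nonneg hη (sq_nonneg ‖gradient L x‖)]

theorem norm_noisy_step_sub_le (hL : IsSmoothWith τ L) (hconv : ConvexOn ℝ univ L)
    (hη : 0 ≤ η) (hτη : τ * η ≤ 1 / 2) {x : F} (hdiff : DifferentiableAt ℝ L x) {y : F}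
    (hy : L y ≤ L (x - η • gradient L x)) {n : F} (hn : ‖n‖ ≤ ε) :
    ‖x - η • gradient L x + η • n - y‖ ≤ ‖x - y‖ + η * ε :=
  (norm_add_smul_sub_le hη hn _ y).trans <| by
    gcongr; exact hL.norm_sub_smul_gradient_sub_le hconv hη hτη hdiff hy

theorem sq_norm_noisy_step_sub_add_le (hL : IsSmoothWith τ L) (hconv : ConvexOn ℝ univ L)
    (hη : 0 ≤ η) (hτη : τ * η ≤ 1 / 2) (hgrad : ∀ x, ‖gradient L x‖ ≤ B) (hB : 0 ≤ B)
    {x : F} (hdiff : DifferentiableAt ℝ L x) {y : F} (hy : L y ≤ L (x - η • gradient L x))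
    {n : F} (hn : ‖n‖ ≤ ε) :
    ‖x - η • gradient L x + η • n - y‖ ^ 2 + 2 * η * (L (x - η • gradient L x + η • n) - L y) ≤
      ‖x - y‖ ^ 2 + 2 * η * ε * ‖x - y‖ + 2 * η ^ 2 * B * ε + 2 * η ^ 2 * ε ^ 2 := by
  set φ := x - η • gradient L x
  have hε : 0 ≤ ε := (norm_nonneg n).trans hn
  have hnoise := norm_add_smul_sub_le hη hn φ y
  have hcontract := hL.norm_sub_smul_gradient_sub_le hconv hη hτη hdiff hy
  have hdist := hL.sq_dist_sub_smul_gradient_le hconv hη hτη hdiff y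
  have hvalue := hL.apply_add_smul_le_of_norm_le hη hτη hgrad hB hn φ
  have hsq : ‖φ + η • n - y‖ ^ 2 ≤ (‖φ - y‖ + η * ε) ^ 2 :=
    pow_le_pow_left₀ (norm_nonneg _) hnoise 2
  nlinarith [mul_le_mul_of_nonneg_left hcontract (mul_nonneg hη hε)]

theorem mul_sub_le_of_noisy_iterates (hL : IsSmoothWith τ L) (hconv : ConvexOn ℝ univ L)
    (hdiff : Differentiable ℝ L) (hη : 0 ≤ η) (hτη : τ * η ≤ 1 / 2)
    (hgrad : ∀ x, ‖gradient L x‖ ≤ B) (hB : 0 ≤ B) (hε : 0 ≤ ε) {y : F}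
    (hmin : ∀ x, L y ≤ L x) {K : ℕ} {θ N : ℕ → F}
    (hrec : ∀ k < K, θ (k + 1) = θ k - η • gradient L (θ k) + η • N k)
    (hN : ∀ k < K, ‖N k‖ ≤ ε) :
    2 * η * K * (L (θ K) - L y) ≤ ‖θ 0 - y‖ ^ 2 + K * (2 * η * ε * (‖θ 0 - y‖ + (K - 1) * η * ε)
      + 2 * η ^ 2 * B * ε + 2 * η ^ 2 * ε ^ 2 + 2 * η * (K - 1) * (η * B * ε + η / 2 * ε ^ 2)) := by
  have hdist : ∀ k < K, ‖θ k - y‖ ≤ ‖θ 0 - y‖ + (K - 1) * η * ε := by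
    intro k hk
    have hchain := le_add_mul_of_forall_succ_le (u := fun k ↦ ‖θ k - y‖) (fun k hk ↦
      hrec k hk ▸ hL.norm_noisy_step_sub_le hconv hη hτη (hdiff _) (hmin _) (hN k hk))
      k.zero_le hk.le
    have hkK : (k : ℝ) + 1 ≤ K := by exact_mod_cast hk
    simp only [Nat.cast_zero, sub_zero] at hchain
    nlinarith [mul_nonneg hη hε]
  have hvalue : ∀ k < K, L (θ K) ≤ L (θ (k + 1)) + (K - 1) * (η * B * ε + η / 2 * ε ^ 2) := by
    intro k hk
    have hchain := le_add_mul_of_forall_succ_le (u := fun k ↦ L (θ k)) (fun k hk ↦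
      hrec k hk ▸ hL.apply_noisy_step_le hη hτη hgrad hB (hN k hk) _)
      (show k + 1 ≤ K from hk) le_rfl
    have hk0 : (0 : ℝ) ≤ k := k.cast_nonneg
    push_cast at hchain
    nlinarith [mul_nonneg (mul_nonneg hη hB) hε, mul_nonneg hη (sq_nonneg ε)]
  have hpotential := le_add_mul_of_forall_succ_le (u := fun k ↦ ‖θ k - y‖ ^ 2)
    (d := 2 * η * ε * (‖θ 0 - y‖ + (K - 1) * η * ε) + 2 * η ^ 2 * B * ε + 2 * η ^ 2 * ε ^ 2
      - 2 * η * (L (θ K) - L y - (K - 1) * (η * B * ε + η / 2 * ε ^ 2)))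
    (fun k hk ↦ by
      have hstep := hrec k hk ▸ hL.sq_norm_noisy_step_sub_add_le hconv hη hτη hgrad hB
        (hdiff _) (hmin _) (hN k hk)
      have hdistk := mul_le_mul_of_nonneg_left (hdist k hk) (by positivity : 0 ≤ 2 * η * ε)
      have hvaluek := mul_le_mul_of_nonneg_left (hvalue k hk) (by positivity : 0 ≤ 2 * η)
      linarith) K.zero_le le_rfl
  simp only [Nat.cast_zero, sub_zero] at hpotential
  linarith [sq_nonneg ‖θ K - y‖]

end IsSmoothWith

/-- deterministic content of Proposition 1: a fixed number `K₀` of noisy gradient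
descent steps reduces the suboptimality gap of a convex smooth objective. -/
theorem stmt_4 {p : ℕ} (L : EuclideanSpace ℝ (Fin p) → ℝ) (τ₂ B η ε : ℝ)
    (hτ₂ : 0 < τ₂) (hB : 0 < B)
    (hdiff : Differentiable ℝ L) (hconv : ConvexOn ℝ Set.univ L)
    (hsmooth : ∀ θ₁ θ₂ : EuclideanSpace ℝ (Fin p),
      L θ₁ - L θ₂ ≤ ⟪gradient L θ₂, θ₁ - θ₂⟫ + τ₂ * ‖θ₁ - θ₂‖ ^ 2)
    (hgrad : ∀ θ : EuclideanSpace ℝ (Fin p), ‖gradient L θ‖ ≤ B)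
    (θhat : EuclideanSpace ℝ (Fin p)) (hmin : ∀ θ, L θhat ≤ L θ)
    (hη : 0 < η) (hηle : η ≤ 1 / (2 * τ₂))
    (K₀ : ℕ) (hK₀ : 1 ≤ K₀)
    (θ N : ℕ → EuclideanSpace ℝ (Fin p))
    (hrec : ∀ k < K₀, θ (k + 1) = θ k - η • gradient L (θ k) + η • N k)
    (hε : 0 ≤ ε) (hN : ∀ k < K₀, ‖N k‖ ≤ ε)
    (R C' : ℝ) (hR : R = ‖θ 0 - θhat‖) (hC' : C' = 2 * η * R + 2 * η ^ 2 * (B + 1))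
    (hsmall : ((K₀ : ℝ) * C' + 2 * ((K₀ : ℝ) - 1) * η) * ε ≤ 1) :
    L (θ K₀) - L θhat ≤
      R ^ 2 / (2 * η * (K₀ : ℝ)) + (R + 1) * ε + (2 * η * B + η * ε / 2) * ((K₀ : ℝ) + 1) * ε := by
  have hτη : τ₂ * η ≤ 1 / 2 := by rw [le_div_iff₀ (by positivity)] at hηle; linarith
  have hηε : 2 * ((K₀ : ℝ) - 1) * η * ε ≤ 1 := by
    have hC'ε : 0 ≤ (K₀ : ℝ) * C' * ε := by rw [hC', hR]; positivity
    nlinarith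
  have hgap := IsSmoothWith.mul_sub_le_of_noisy_iterates hsmooth hconv hdiff hη.le hτη hgrad
    hB.le hε hmin hrec hN
  rw [← hR] at hgap
  -- `2ηK` times the claimed noise terms exceeds the noise terms of `hgap` by exactly this.
  have hslack : 0 ≤ 2 * η * K₀ * ε * (η * B * (K₀ + 2) + 1 - η * ε * (K₀ - 1)) :=
    mul_nonneg (by positivity) (by nlinarith [mul_nonneg hη.le hB.le])
  rw [add_assoc, ← sub_le_iff_le_add, le_div_iff₀ (by positivity)]
  linarith
end

section
/- Let L : ℝ^p → ℝ be twice continuously differentiable with positive semidefinite Hessian ∇²L(θ) at every θ ∈ ℝ^p, let θ̂ ∈ ℝ^p satisfy ∇L(θ̂) = 0, and let r, τ₁ > 0. Suppose that ⟨∇L(θ₁) − ∇L(θ₂), θ₁ − θ₂⟩ ≥ 2τ₁‖θ₁ − θ₂‖₂² for all θ₁, θ₂ in the closed ball of radius r around θ̂. If θ ∈ ℝ^p satisfies ‖∇L(θ)‖₂ < 2τ₁ r, then ‖θ − θ̂‖₂ ≤ r. -/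
open scoped RealInnerProductSpace

/-!
Suppose `‖θ - θ̂‖ > r` and let `θ_r` be the point where the segment from `θ̂` to `θ` leaves the
ball. Since the Hessian is positive semidefinite, the directional derivative
`t ↦ ⟪θ - θ̂, ∇L(θ̂ + t (θ - θ̂))⟫` is nondecreasing, so it is at least its value at `θ_r`,
which the monotonicity inequality on the ball (applied to `θ_r` and `θ̂`) bounds below by
`2τ₁ r ‖θ - θ̂‖`. By Cauchy–Schwarz its value at `θ` is below `‖θ - θ̂‖ ‖∇L(θ)‖ < 2τ₁ r ‖θ - θ̂‖`.
-/

section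

variable {E : Type*} [NormedAddCommGroup E] [InnerProductSpace ℝ E]

theorem monotone_inner_apply_add_smul {g : E → E} {H : E → E →L[ℝ] E}
    (hg : ∀ x, HasFDerivAt g (H x) x) (hH : ∀ x u, 0 ≤ ⟪u, H x u⟫) (a v : E) :
    Monotone fun t : ℝ => ⟪v, g (a + t • v)⟫ := by
  have hderiv (t : ℝ) :
      HasDerivAt (fun t : ℝ => ⟪v, g (a + t • v)⟫) ⟪v, H (a + t • v) v⟫ t := by
    have hline : HasDerivAt (fun t : ℝ => a + t • v) v t := by
      simpa using ((hasDerivAt_id t).smul_const v).const_add a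
    exact (innerSL ℝ v).hasFDerivAt.comp_hasDerivAt t ((hg _).comp_hasDerivAt t hline)
  exact monotone_of_deriv_nonneg (fun t => (hderiv t).differentiableAt)
    fun t => (hderiv t).deriv ▸ hH _ v

theorem norm_sub_le_of_monotone_ray_of_le_inner_on_sphere {g : E → E} {c x : E} {r m : ℝ}
    (hr : 0 < r) (hray : Monotone fun t : ℝ => ⟪x - c, g (c + t • (x - c))⟫)
    (hsphere : ∀ y, ‖y - c‖ = r → m * r ^ 2 ≤ ⟪g y, y - c⟫) (hx : ‖g x‖ < m * r) :
    ‖x - c‖ ≤ r := by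
  by_contra! hxr
  set v := x - c
  have hv : 0 < ‖v‖ := hr.trans hxr
  set s := r / ‖v‖
  have hs : 0 < s := div_pos hr hv
  have hsv : s * ‖v‖ = r := div_mul_cancel₀ r hv.ne'
  have hexit : m * r ^ 2 ≤ s * ⟪v, g (c + s • v)⟫ := by
    have hnorm : ‖c + s • v - c‖ = r := by
      rw [add_sub_cancel_left, norm_smul, Real.norm_of_nonneg hs.le, hsv]
    simpa only [add_sub_cancel_left, real_inner_smul_right, real_inner_comm v]
      using hsphere _ hnorm
  have hle : ⟪v, g (c + s • v)⟫ ≤ ⟪v, g x⟫ := by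
    simpa [v] using hray ((div_le_one hv).2 hxr.le)
  have hlt : ⟪v, g x⟫ < ‖v‖ * (m * r) :=
    (real_inner_le_norm _ _).trans_lt (mul_lt_mul_of_pos_left hx hv)
  have : s * ⟪v, g x⟫ < m * r ^ 2 := by
    calc s * ⟪v, g x⟫ < s * (‖v‖ * (m * r)) := mul_lt_mul_of_pos_left hlt hs
      _ = m * r ^ 2 := by rw [← mul_assoc, hsv]; ring
  linarith [mul_le_mul_of_nonneg_left hle hs.le]

end

theorem stmt_6_general {p : ℕ} (L : EuclideanSpace ℝ (Fin p) → ℝ)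
    (H : EuclideanSpace ℝ (Fin p) → (EuclideanSpace ℝ (Fin p) →L[ℝ] EuclideanSpace ℝ (Fin p)))
    (hH : ∀ x, HasFDerivAt (gradient L) (H x) x)
    (hpsd : ∀ (x u : EuclideanSpace ℝ (Fin p)), 0 ≤ ⟪u, H x u⟫)
    (θhat : EuclideanSpace ℝ (Fin p)) (hcrit : gradient L θhat = 0)
    (r τ₁ : ℝ) (hr : 0 < r)
    (hmono : ∀ θ₁ θ₂ : EuclideanSpace ℝ (Fin p), ‖θ₁ - θhat‖ ≤ r → ‖θ₂ - θhat‖ ≤ r →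
      2 * τ₁ * ‖θ₁ - θ₂‖ ^ 2 ≤ ⟪gradient L θ₁ - gradient L θ₂, θ₁ - θ₂⟫)
    (θ : EuclideanSpace ℝ (Fin p)) (hθ : ‖gradient L θ‖ < 2 * τ₁ * r) :
    ‖θ - θhat‖ ≤ r := by
  refine norm_sub_le_of_monotone_ray_of_le_inner_on_sphere hr
    (monotone_inner_apply_add_smul hH hpsd _ _) (fun y hy => ?_) hθ
  simpa [hcrit, hy] using hmono y θhat hy.le (by simpa using hr.le)

/-- if the gradient of a convex (PSD-Hessian) `C²` function is monotone with
parameter `2τ₁` on the ball of radius `r` around a critical point `θ̂`, then any point whose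
gradient is smaller than `2τ₁ r` in norm must lie in that ball. -/
theorem stmt_6 {p : ℕ} (L : EuclideanSpace ℝ (Fin p) → ℝ) (hC2 : ContDiff ℝ 2 L)
    (H : EuclideanSpace ℝ (Fin p) → (EuclideanSpace ℝ (Fin p) →L[ℝ] EuclideanSpace ℝ (Fin p)))
    (hH : ∀ x, HasFDerivAt (gradient L) (H x) x)
    (hpsd : ∀ (x u : EuclideanSpace ℝ (Fin p)), 0 ≤ ⟪u, H x u⟫)
    (θhat : EuclideanSpace ℝ (Fin p)) (hcrit : gradient L θhat = 0)
    (r τ₁ : ℝ) (hr : 0 < r) (hτ₁ : 0 < τ₁)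
    (hmono : ∀ θ₁ θ₂ : EuclideanSpace ℝ (Fin p), ‖θ₁ - θhat‖ ≤ r → ‖θ₂ - θhat‖ ≤ r →
      2 * τ₁ * ‖θ₁ - θ₂‖ ^ 2 ≤ ⟪gradient L θ₁ - gradient L θ₂, θ₁ - θ₂⟫)
    (θ : EuclideanSpace ℝ (Fin p)) (hθ : ‖gradient L θ‖ < 2 * τ₁ * r) :
    ‖θ - θhat‖ ≤ r :=
  stmt_6_general L H hH hpsd θhat hcrit r τ₁ hr hmono θ hθ
end

section
/- Let L : ℝ^p → ℝ be twice continuously differentiable whose Hessian is L₀-Lipschitz in spectral norm, i.e. ‖∇²L(θ₁) − ∇²L(θ₂)‖₂ ≤ L₀‖θ₁ − θ₂‖₂ for all θ₁, θ₂ ∈ ℝ^p. Fix θ ∈ ℝ^p such that ∇²L(θ) is invertible with smallest eigenvalue λ_min(∇²L(θ)) ≥ μ₀ > 0, and set Δθ = −[∇²L(θ)]⁻¹∇L(θ). Then for every N ∈ ℝ^p: ‖∇L(θ + Δθ + N)‖₂ ≤ (L₀/(2μ₀²))‖∇L(θ)‖₂² + (L₀‖Δθ‖₂ + ‖∇²L(θ)‖₂)‖N‖₂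 + (L₀/2)‖N‖₂². -/
open Set
open scoped RealInnerProductSpace

/-!
Along the segment `t ↦ x + t • h`, the remainder `g (x + t • h) - g x - t • H x h` has derivative
`(H (x + t • h) - H x) h`, of norm at most `L₀ t ‖h‖²`; integrating gives the quadratic Taylor bound
`‖g (x + h) - g x - H x h‖ ≤ L₀/2 ‖h‖²`. The exact Newton step kills the linear term, so
`‖∇L(θ + Δθ)‖ ≤ L₀/2 ‖Δθ‖²`, and coercivity of `∇²L(θ)` gives `μ₀ ‖Δθ‖ ≤ ‖∇L(θ)‖`. The noise `N`
is then absorbed by a second Taylor expansion at `θ + Δθ`, where `‖∇²L(θ + Δθ)‖ ≤ ‖∇²L(θ)‖ + L₀ ‖Δθ‖`.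
-/

section LipschitzDerivative

variable {E F : Type*} [NormedAddCommGroup E] [NormedSpace ℝ E] [NormedAddCommGroup F]
  [NormedSpace ℝ F] {g : E → F} {H : E → E →L[ℝ] F} {L₀ : ℝ}

theorem norm_image_add_sub_sub_le_of_lipschitz_fderiv (hH : ∀ x, HasFDerivAt g (H x) x)
    (hLip : ∀ x y, ‖H x - H y‖ ≤ L₀ * ‖x - y‖) (x h : E) :
    ‖g (x + h) - g x - H x h‖ ≤ L₀ / 2 * ‖h‖ ^ 2 := by
  set r : ℝ → F := fun t => g (x + t • h) - g x - t • H x h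
  have hr : ∀ t : ℝ, HasDerivAt r (H (x + t • h) h - H x h) t := fun t => by
    have hline : HasDerivAt (fun t : ℝ => x + t • h) h t := by
      simpa using ((hasDerivAt_id t).smul_const h).const_add x
    have hlin : HasDerivAt (fun t : ℝ => t • H x h) (H x h) t := by
      simpa using (hasDerivAt_id t).smul_const (H x h)
    exact (((hH _).comp_hasDerivAt t hline).sub_const (g x)).sub hlin
  have hB : ∀ t : ℝ, HasDerivAt (fun t => L₀ / 2 * ‖h‖ ^ 2 * t ^ 2) (L₀ * ‖h‖ ^ 2 * t) t :=
    fun t => ((hasDerivAt_pow 2 t).const_mul _).congr_deriv (by ring)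
  have hbound : ∀ t ∈ Ico (0 : ℝ) 1, ‖H (x + t • h) h - H x h‖ ≤ L₀ * ‖h‖ ^ 2 * t := by
    intro t ht
    calc ‖H (x + t • h) h - H x h‖ = ‖(H (x + t • h) - H x) h‖ := rfl
      _ ≤ ‖H (x + t • h) - H x‖ * ‖h‖ := (H (x + t • h) - H x).le_opNorm h
      _ ≤ L₀ * ‖x + t • h - x‖ * ‖h‖ := by gcongr; exact hLip _ _
      _ = L₀ * ‖h‖ ^ 2 * t := by
        rw [add_sub_cancel_left, norm_smul, Real.norm_of_nonneg ht.1]; ring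
  have hr_one := image_norm_le_of_norm_deriv_right_le_deriv_boundary
    (fun t _ => (hr t).continuousAt.continuousWithinAt) (fun t _ => (hr t).hasDerivWithinAt)
    (by simp [r]) hB hbound (right_mem_Icc.2 zero_le_one)
  simpa [r] using hr_one

theorem norm_image_add_le_of_lipschitz_fderiv (hH : ∀ x, HasFDerivAt g (H x) x)
    (hLip : ∀ x y, ‖H x - H y‖ ≤ L₀ * ‖x - y‖) (x h : E) :
    ‖g (x + h)‖ ≤ ‖g x‖ + ‖H x‖ * ‖h‖ + L₀ / 2 * ‖h‖ ^ 2 := by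
  calc ‖g (x + h)‖ = ‖g x + H x h + (g (x + h) - g x - H x h)‖ := by abel_nf
    _ ≤ ‖g x‖ + ‖H x h‖ + ‖g (x + h) - g x - H x h‖ := norm_add₃_le
    _ ≤ ‖g x‖ + ‖H x‖ * ‖h‖ + L₀ / 2 * ‖h‖ ^ 2 := by
      gcongr
      · exact (H x).le_opNorm h
      · exact norm_image_add_sub_sub_le_of_lipschitz_fderiv hH hLip x h

end LipschitzDerivative

theorem mul_norm_le_norm_apply_of_coercive {E : Type*} [NormedAddCommGroup E]
    [InnerProductSpace ℝ E] {A : E →L[ℝ] E} {μ : ℝ} (hA : ∀ u, μ * ‖u‖ ^ 2 ≤ ⟪u, A u⟫) (u : E) :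
    μ * ‖u‖ ≤ ‖A u‖ := by
  rcases eq_or_ne u 0 with rfl | hu
  · simp
  have hpos : 0 < ‖u‖ := norm_pos_iff.2 hu
  have : μ * ‖u‖ * ‖u‖ ≤ ‖A u‖ * ‖u‖ := by
    calc μ * ‖u‖ * ‖u‖ = μ * ‖u‖ ^ 2 := by ring
      _ ≤ ⟪u, A u⟫ := hA u
      _ ≤ ‖u‖ * ‖A u‖ := real_inner_le_norm _ _
      _ = ‖A u‖ * ‖u‖ := mul_comm _ _
  exact le_of_mul_le_mul_right this hpos

theorem stmt_7_general {p : ℕ} (L : EuclideanSpace ℝ (Fin p) → ℝ) (L₀ : ℝ) (hL₀ : 0 < L₀)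
    (H : EuclideanSpace ℝ (Fin p) → (EuclideanSpace ℝ (Fin p) →L[ℝ] EuclideanSpace ℝ (Fin p)))
    (hH : ∀ x, HasFDerivAt (gradient L) (H x) x)
    (hLip : ∀ θ₁ θ₂ : EuclideanSpace ℝ (Fin p), ‖H θ₁ - H θ₂‖ ≤ L₀ * ‖θ₁ - θ₂‖)
    (θ : EuclideanSpace ℝ (Fin p)) (μ₀ : ℝ) (hμ₀ : 0 < μ₀)
    (hunit : IsUnit (H θ))
    (hmin : ∀ u : EuclideanSpace ℝ (Fin p), μ₀ * ‖u‖ ^ 2 ≤ ⟪u, H θ u⟫)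
    (Δθ : EuclideanSpace ℝ (Fin p)) (hΔ : Δθ = -(Ring.inverse (H θ) (gradient L θ)))
    (N : EuclideanSpace ℝ (Fin p)) :
    ‖gradient L (θ + Δθ + N)‖ ≤
      L₀ / (2 * μ₀ ^ 2) * ‖gradient L θ‖ ^ 2 + (L₀ * ‖Δθ‖ + ‖H θ‖) * ‖N‖ + L₀ / 2 * ‖N‖ ^ 2 := by
  have hnewton : H θ Δθ = -gradient L θ := by
    rw [hΔ, map_neg, ← mul_apply_eq_comp, Ring.mul_inverse_cancel _ hunit,
      one_apply_eq_self]
  have hstep : μ₀ * ‖Δθ‖ ≤ ‖gradient L θ‖ := by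
    simpa [hnewton] using mul_norm_le_norm_apply_of_coercive hmin Δθ
  have hexact : ‖gradient L (θ + Δθ)‖ ≤ L₀ / (2 * μ₀ ^ 2) * ‖gradient L θ‖ ^ 2 := by
    have hquad := norm_image_add_sub_sub_le_of_lipschitz_fderiv hH hLip θ Δθ
    rw [hnewton, sub_neg_eq_add, sub_add_cancel] at hquad
    calc ‖gradient L (θ + Δθ)‖ ≤ L₀ / (2 * μ₀ ^ 2) * (μ₀ * ‖Δθ‖) ^ 2 := by
          convert hquad using 1; field_simp
      _ ≤ L₀ / (2 * μ₀ ^ 2) * ‖gradient L θ‖ ^ 2 := by gcongr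
  have hhess : ‖H (θ + Δθ)‖ ≤ L₀ * ‖Δθ‖ + ‖H θ‖ := by
    calc ‖H (θ + Δθ)‖ ≤ ‖H θ‖ + ‖H (θ + Δθ) - H θ‖ := norm_le_norm_add_norm_sub' _ _
      _ ≤ ‖H θ‖ + L₀ * ‖Δθ‖ := by simpa using hLip (θ + Δθ) θ
      _ = L₀ * ‖Δθ‖ + ‖H θ‖ := add_comm _ _
  calc ‖gradient L (θ + Δθ + N)‖
      ≤ ‖gradient L (θ + Δθ)‖ + ‖H (θ + Δθ)‖ * ‖N‖ + L₀ / 2 * ‖N‖ ^ 2 :=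
        norm_image_add_le_of_lipschitz_fderiv hH hLip _ N
    _ ≤ _ := by gcongr

/-- the key one-step inequality for a noisy Newton step `θ ↦ θ + Δθ + N`,
where `Δθ = -[∇²L(θ)]⁻¹ ∇L(θ)` and the Hessian is `L₀`-Lipschitz in operator norm. -/
theorem stmt_7 {p : ℕ} (L : EuclideanSpace ℝ (Fin p) → ℝ) (L₀ : ℝ) (hL₀ : 0 < L₀)
    (hC2 : ContDiff ℝ 2 L)
    (H : EuclideanSpace ℝ (Fin p) → (EuclideanSpace ℝ (Fin p) →L[ℝ] EuclideanSpace ℝ (Fin p)))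
    (hH : ∀ x, HasFDerivAt (gradient L) (H x) x)
    (hLip : ∀ θ₁ θ₂ : EuclideanSpace ℝ (Fin p), ‖H θ₁ - H θ₂‖ ≤ L₀ * ‖θ₁ - θ₂‖)
    (θ : EuclideanSpace ℝ (Fin p)) (μ₀ : ℝ) (hμ₀ : 0 < μ₀)
    (hunit : IsUnit (H θ))
    (hmin : ∀ u : EuclideanSpace ℝ (Fin p), μ₀ * ‖u‖ ^ 2 ≤ ⟪u, H θ u⟫)
    (Δθ : EuclideanSpace ℝ (Fin p)) (hΔ : Δθ = -(Ring.inverse (H θ) (gradient L θ)))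
    (N : EuclideanSpace ℝ (Fin p)) :
    ‖gradient L (θ + Δθ + N)‖ ≤
      L₀ / (2 * μ₀ ^ 2) * ‖gradient L θ‖ ^ 2 + (L₀ * ‖Δθ‖ + ‖H θ‖) * ‖N‖ + L₀ / 2 * ‖N‖ ^ 2 :=
  stmt_7_general L L₀ hL₀ H hH hLip θ μ₀ hμ₀ hunit hmin Δθ hΔ N
end

section
/- For all τ₁, B, B̄, L₀, r > 0 there exist constants c, C > 0 depending only on (τ₁, B, B̄, L₀, r) with the following property. Let L : ℝ^p → ℝ be twice continuously differentiable such that: ∇²L(θ) is positive semidefinite for every θ ∈ ℝ^p; ‖∇L(θ)‖₂ ≤ B and ‖∇²L(θ)‖₂ ≤ B̄ for all θ; the Hessian is L₀-Lipschitz in spectral norm (‖∇²L(θ₁) − ∇²L(θ₂)‖₂ ≤ L₀‖θ₁ − θ₂‖₂ for all θ₁, θ₂); θ̂ is a point with ∇L(θ̂) = 0; L(θ₁) − L(θ₂) ≥ ⟨∇L(θ₂), θ₁ − θ₂⟩ + τ₁‖θ₁ − θ₂‖₂² for all θ₁, θ₂ in the closed ball of radius r around θ̂; and the initial point satisfies ‖∇L(θ^{(0)})‖₂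 ≤ min{τ₁ r, τ₁²/L₀}. Let (θ^{(k)}) be noisy Newton iterates with ‖N_k‖₂ ≤ ε for all k, where 0 ≤ ε ≤ c. Then for every K ≥ 1: ‖θ^{(K)} − θ̂‖₂ ≤ C(2^{−2^K} + ε). -/
open scoped RealInnerProductSpace
open Metric Filter Topology

/-!
Strong convexity on the ball makes `∇L` strongly monotone there with constant `μ = 2τ₁`, so the
Hessian is `μ`-coercive inside the ball (hence invertible with inverse of norm at most `1/μ`), and
`‖∇L x‖` controls the distance from `x` to `θ̂` (outside the ball through monotonicity of `∇L`
along rays). With an `L₀`-Lipschitz Hessian, a noisy Newton step turns a gradient of norm `a`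
into one of norm at most `(L₀/μ²) a² + O(ε)`. This keeps the gradients below their initial bound,
and `e_k = (L₀/μ²) ‖∇L(θ^{(k)})‖` satisfies `e_{k+1} ≤ e_k² + δ` with `e_0 ≤ 1/4`, which forces
`e_k ≤ 2^(-2^k-1) + 3δ`.
-/

theorem mul_le_of_mul_sq_le_mul {a b d : ℝ} (hb : 0 ≤ b) (hd : 0 ≤ d) (h : a * d ^ 2 ≤ b * d) :
    a * d ≤ b := by
  rcases hd.eq_or_lt with rfl | hd
  · simpa using hb
  · exact le_of_mul_le_mul_right (by nlinarith) hd

theorem le_of_le_mul_sq_add {a : ℕ → ℝ} {A β m : ℝ} (hA : 0 ≤ A) (ha : ∀ k, 0 ≤ a k)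
    (hAm : A * m ≤ 1 / 4) (hβ : β ≤ m / 2) (h0 : a 0 ≤ m)
    (hstep : ∀ k, a k ≤ m → a (k + 1) ≤ A * a k ^ 2 + β) (k : ℕ) : a k ≤ m := by
  induction k with
  | zero => exact h0
  | succ k ih =>
    have hm : 0 ≤ m := (ha 0).trans h0
    have : A * a k ^ 2 ≤ m / 4 := by
      nlinarith [mul_le_mul_of_nonneg_left ih (mul_nonneg hA (ha k)), ha k]
    linarith [hstep k ih]

theorem le_half_pow_two_pow_of_le_sq_add {e : ℕ → ℝ} {δ : ℝ} (he : ∀ k, 0 ≤ e k)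
    (h0 : e 0 ≤ 1 / 4) (hδ0 : 0 ≤ δ) (hδ : δ ≤ 1 / 18) (hstep : ∀ k, e (k + 1) ≤ e k ^ 2 + δ)
    (k : ℕ) : e k ≤ (1 / 2) ^ (2 ^ k + 1) + 3 * δ := by
  induction k with
  | zero => norm_num; linarith
  | succ k ih =>
    set φ : ℝ := (1 / 2) ^ (2 ^ k + 1)
    have hφ : φ ≤ 1 / 4 := by
      calc φ ≤ (1 / 2) ^ 2 :=
            pow_le_pow_of_le_one (by norm_num) (by norm_num) (by have := k.one_le_two_pow; omega)
        _ = 1 / 4 := by norm_num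
    have hφ' : (1 / 2 : ℝ) ^ (2 ^ (k + 1) + 1) = 2 * φ ^ 2 := by
      simp only [φ, pow_succ]
      ring
    rw [hφ']
    nlinarith [hstep k, pow_le_pow_left₀ (he k) ih 2, show 0 ≤ φ by positivity]

theorem mul_div_add_sq_add_mul_le {K μ a ε B : ℝ} (hK : 0 ≤ K) (hμ : 0 < μ)
    (hKa : K * a ≤ μ ^ 2 / 4) (hε0 : 0 ≤ ε) (hε1 : ε ≤ 1) :
    K * (a / μ + ε) ^ 2 + B * ε ≤ K / μ ^ 2 * a ^ 2 + (μ / 2 + K + B) * ε := by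
  have hsq : K * (a / μ + ε) ^ 2 = K / μ ^ 2 * a ^ 2 + 2 * (K * a) / μ * ε + K * ε ^ 2 := by
    field_simp
    ring
  have hcross : 2 * (K * a) / μ ≤ μ / 2 := by
    rw [div_le_iff₀ hμ]
    nlinarith
  rw [hsq]
  nlinarith [mul_le_mul_of_nonneg_right hcross hε0, mul_le_mul_of_nonneg_left hε1 hε0]

theorem norm_sub_sub_fderiv_le_of_lipschitzWith {E F : Type*} [NormedAddCommGroup E]
    [NormedSpace ℝ E] [NormedAddCommGroup F] [NormedSpace ℝ F] {f : E → F}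
    {f' : E → E →L[ℝ] F} {K : NNReal} (hf : ∀ x, HasFDerivAt f (f' x) x)
    (hf' : LipschitzWith K f') (x y : E) :
    ‖f y - f x - f' x (y - x)‖ ≤ K * ‖y - x‖ ^ 2 := by
  have hy : y ∈ closedBall x ‖y - x‖ := by simp [dist_eq_norm]
  calc ‖f y - f x - f' x (y - x)‖ ≤ K * ‖y - x‖ * ‖y - x‖ :=
        (convex_closedBall x _).norm_image_sub_le_of_norm_hasFDerivWithin_le'
          (fun z _ => (hf z).hasFDerivWithinAt)
          (fun z hz => by
            rw [← dist_eq_norm]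
            exact (hf'.dist_le_mul z x).trans (by gcongr; simpa using hz))
          (mem_closedBall_self (norm_nonneg _)) hy
    _ = K * ‖y - x‖ ^ 2 := by ring

section InnerProductSpace

variable {E : Type*} [NormedAddCommGroup E] [InnerProductSpace ℝ E]

def StrongMonotoneOn (μ : ℝ) (g : E → E) (s : Set E) : Prop :=
  ∀ x ∈ s, ∀ y ∈ s, μ * ‖x - y‖ ^ 2 ≤ ⟪g x - g y, x - y⟫

theorem strongMonotoneOn_of_strongConvexOn {L : E → ℝ} {g : E → E} {s : Set E} {τ : ℝ}
    (hL : ∀ x ∈ s, ∀ y ∈ s, L x - L y ≥ ⟪g y, x - y⟫ + τ * ‖x - y‖ ^ 2) :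
    StrongMonotoneOn (2 * τ) g s := by
  intro x hx y hy
  have hxy := hL x hx y hy
  have hyx := hL y hy x hx
  rw [← neg_sub x y, inner_neg_right, norm_neg] at hyx
  rw [inner_sub_left]
  linarith

theorem HasFDerivAt.hasDerivAt_inner_add_smul {g : E → E} {T : E →L[ℝ] E} {x u : E} {t : ℝ}
    (hg : HasFDerivAt g T (x + t • u)) :
    HasDerivAt (fun t : ℝ => ⟪u, g (x + t • u)⟫) ⟪u, T u⟫ t := by
  have hline : HasDerivAt (fun t : ℝ => x + t • u) u t := by
    simpa using ((hasDerivAt_id t).smul_const u).const_add x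
  exact (innerSL ℝ u).hasFDerivAt.comp_hasDerivAt t (hg.comp_hasDerivAt t hline)

theorem inner_sub_nonneg_of_hasFDerivAt {g : E → E} {H : E → E →L[ℝ] E}
    (hg : ∀ x, HasFDerivAt g (H x) x) (hH : ∀ x u, 0 ≤ ⟪u, H x u⟫) (x y : E) :
    0 ≤ ⟪g x - g y, x - y⟫ := by
  have hφ (t : ℝ) := (hg (y + t • (x - y))).hasDerivAt_inner_add_smul
  have hmono : Monotone fun t : ℝ => ⟪x - y, g (y + t • (x - y))⟫ :=
    monotone_of_deriv_nonneg (fun t => (hφ t).differentiableAt)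
      fun t => (hφ t).deriv ▸ hH _ _
  have h01 := hmono zero_le_one
  simp only [zero_smul, add_zero, one_smul, add_sub_cancel] at h01
  rw [real_inner_comm, inner_sub_right]
  linarith

theorem StrongMonotoneOn.le_inner_apply_of_hasFDerivAt {μ : ℝ} {g : E → E} {s : Set E} {x : E}
    {T : E →L[ℝ] E} (h : StrongMonotoneOn μ g s) (hs : s ∈ 𝓝 x) (hg : HasFDerivAt g T x)
    (u : E) : μ * ‖u‖ ^ 2 ≤ ⟪u, T u⟫ := by
  have hφ : HasDerivAt (fun t : ℝ => ⟪u, g (x + t • u)⟫) ⟪u, T u⟫ 0 :=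
    HasFDerivAt.hasDerivAt_inner_add_smul (by simpa using hg)
  have hline : Tendsto (fun t : ℝ => x + t • u) (𝓝 0) (𝓝 x) :=
    (continuous_const.add (continuous_id.smul continuous_const)).tendsto' 0 x (by simp)
  have hmem : ∀ᶠ t in 𝓝[>] (0 : ℝ), 0 < t ∧ x + t • u ∈ s :=
    eventually_mem_nhdsWithin.and (nhdsWithin_le_nhds (hline.eventually hs))
  refine ge_of_tendsto hφ.tendsto_slope_zero_right (hmem.mono fun t ⟨ht, hts⟩ => ?_)
  have hx : x ∈ s := mem_of_mem_nhds hs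
  have key := h _ hts x hx
  simp only [add_sub_cancel_left, norm_smul, Real.norm_eq_abs, abs_of_pos ht,
    inner_smul_right, zero_add, zero_smul, add_zero, smul_eq_mul] at key ⊢
  rw [← inner_sub_right, real_inner_comm, le_inv_mul_iff₀ ht]
  nlinarith

theorem mul_norm_le_norm_apply_of_coercive_s8 {μ : ℝ} {T : E →L[ℝ] E}
    (hT : ∀ u, μ * ‖u‖ ^ 2 ≤ ⟪u, T u⟫) (u : E) : μ * ‖u‖ ≤ ‖T u‖ := by
  refine mul_le_of_mul_sq_le_mul (norm_nonneg _) (norm_nonneg _) ((hT u).trans ?_)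
  rw [mul_comm]
  exact real_inner_le_norm _ _

theorem isInvertible_of_coercive [CompleteSpace E] {μ : ℝ} (hμ : 0 < μ) {T : E →L[ℝ] E}
    (hT : ∀ u, μ * ‖u‖ ^ 2 ≤ ⟪u, T u⟫) : T.IsInvertible := by
  have hB : IsCoercive ((innerSL ℝ).comp T : E →L[ℝ] E →L[ℝ] ℝ) :=
    ⟨μ, hμ, fun u => by simpa [sq, mul_assoc, real_inner_comm] using hT u⟩
  refine ⟨hB.continuousLinearEquivOfBilin, ContinuousLinearMap.ext fun v => ?_⟩
  refine ext_inner_right ℝ fun w => ?_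
  simp

theorem apply_ringInverse_of_coercive [CompleteSpace E] {μ : ℝ} (hμ : 0 < μ) {T : E →L[ℝ] E}
    (hT : ∀ u, μ * ‖u‖ ^ 2 ≤ ⟪u, T u⟫) (v : E) : T (Ring.inverse T v) = v := by
  rw [ContinuousLinearMap.ringInverse_eq_inverse]
  exact (isInvertible_of_coercive hμ hT).self_apply_inverse v

theorem StrongMonotoneOn.mul_min_le_norm {μ r : ℝ} {g : E → E} {θ : E} (hr : 0 < r)
    (h : StrongMonotoneOn μ g (closedBall θ r)) (hθ : g θ = 0)
    (hmono : ∀ x y, 0 ≤ ⟪g x - g y, x - y⟫) (x : E) :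
    μ * min ‖x - θ‖ r ≤ ‖g x‖ := by
  have hball : ∀ z ∈ closedBall θ r, μ * ‖z - θ‖ ^ 2 ≤ ⟪g z, z - θ⟫ := fun z hz => by
    simpa [hθ] using h z hz θ (mem_closedBall_self hr.le)
  rcases le_or_gt ‖x - θ‖ r with hx | hx
  · rw [min_eq_left hx]
    exact mul_le_of_mul_sq_le_mul (norm_nonneg _) (norm_nonneg _)
      ((hball x (mem_closedBall_iff_norm.2 hx)).trans (real_inner_le_norm _ _))
  · -- compare `x` with the point `z` where the ray from `θ` through `x` leaves the ball
    rw [min_eq_right hx.le]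
    set d := ‖x - θ‖
    have hd : 0 < d := hr.trans hx
    set z := θ + (r / d) • (x - θ)
    have hzθ : z - θ = (r / d) • (x - θ) := add_sub_cancel_left _ _
    have hxz : x - z = (1 - r / d) • (x - θ) := by
      rw [sub_smul, one_smul]; simp only [z]; abel
    have hz : z ∈ closedBall θ r := by
      rw [mem_closedBall_iff_norm, hzθ, norm_smul, Real.norm_of_nonneg (by positivity),
        div_mul_cancel₀ _ hd.ne']
    have hzx : ⟪g z, x - θ⟫ ≤ ⟪g x, x - θ⟫ := by
      have h1 := hmono x z
      rw [hxz, inner_smul_right, inner_sub_left] at h1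
      have h2 : 0 < 1 - r / d := sub_pos.2 ((div_lt_one hd).2 hx)
      nlinarith
    refine le_of_mul_le_mul_right ?_ hr
    calc μ * r * r = μ * ‖z - θ‖ ^ 2 := by
          rw [hzθ, norm_smul, Real.norm_of_nonneg (by positivity), div_mul_cancel₀ _ hd.ne']
          ring
      _ ≤ ⟪g z, z - θ⟫ := hball z hz
      _ = r / d * ⟪g z, x - θ⟫ := by rw [hzθ, inner_smul_right]
      _ ≤ r / d * ⟪g x, x - θ⟫ := by gcongr
      _ ≤ r / d * (‖g x‖ * d) := by gcongr; exact real_inner_le_norm _ _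
      _ = ‖g x‖ * r := by field_simp

theorem StrongMonotoneOn.norm_sub_lt_of_norm_lt {μ r : ℝ} {g : E → E} {θ x : E} (hμ : 0 < μ)
    (hr : 0 < r) (h : StrongMonotoneOn μ g (closedBall θ r)) (hθ : g θ = 0)
    (hmono : ∀ x y, 0 ≤ ⟪g x - g y, x - y⟫) (hx : ‖g x‖ < μ * r) :
    ‖x - θ‖ < r ∧ μ * ‖x - θ‖ ≤ ‖g x‖ := by
  have hmin := h.mul_min_le_norm hr hθ hmono x
  have hlt : ‖x - θ‖ < r := by
    simpa using lt_of_mul_lt_mul_left (hmin.trans_lt hx) hμ.le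
  rw [min_eq_left hlt.le] at hmin
  exact ⟨hlt, hmin⟩

theorem norm_newton_step_le [CompleteSpace E] {g : E → E} {H : E → E →L[ℝ] E} {K : NNReal}
    (hg : ∀ x, HasFDerivAt g (H x) x) (hH : LipschitzWith K H) {μ : ℝ} (hμ : 0 < μ) {x : E}
    (hx : ∀ u, μ * ‖u‖ ^ 2 ≤ ⟪u, H x u⟫) (n : E) :
    ‖g (x - Ring.inverse (H x) (g x) + n)‖ ≤ K * (‖g x‖ / μ + ‖n‖) ^ 2 + ‖H x‖ * ‖n‖ := by
  set w := Ring.inverse (H x) (g x)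
  set y := x - w + n
  have hHw : H x w = g x := apply_ringInverse_of_coercive hμ hx _
  have hw : ‖w‖ ≤ ‖g x‖ / μ := by
    rw [le_div_iff₀' hμ, ← hHw]; exact mul_norm_le_norm_apply_of_coercive_s8 hx w
  have hyx : y - x = n - w := by simp only [y]; abel
  have hgy : g y = (g y - g x - H x (y - x)) + H x n := by
    rw [hyx, map_sub, hHw]; abel
  calc ‖g y‖ ≤ K * ‖y - x‖ ^ 2 + ‖H x‖ * ‖n‖ := by
        rw [hgy]
        exact (norm_add_le _ _).trans
          (add_le_add (norm_sub_sub_fderiv_le_of_lipschitzWith hg hH x y) ((H x).le_opNorm n))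
    _ ≤ K * (‖g x‖ / μ + ‖n‖) ^ 2 + ‖H x‖ * ‖n‖ := by
        gcongr
        rw [hyx]
        linarith [norm_sub_le n w]

theorem norm_sub_le_of_noisyNewton [CompleteSpace E] {g : E → E} {H : E → E →L[ℝ] E} {K : NNReal}
    {θ N : ℕ → E} {θhat : E} {μ r Bbar ε m β : ℝ}
    (hg : ∀ x, HasFDerivAt g (H x) x) (hH : LipschitzWith K H) (hHB : ∀ x, ‖H x‖ ≤ Bbar)
    (hmono : ∀ x y, 0 ≤ ⟪g x - g y, x - y⟫) (hstrong : StrongMonotoneOn μ g (closedBall θhat r))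
    (hθhat : g θhat = 0) (hμ : 0 < μ) (hK : 0 < K) (hr : 0 < r)
    (hθ : ∀ k, θ (k + 1) = θ k - Ring.inverse (H (θ k)) (g (θ k)) + N k)
    (hN : ∀ k, ‖N k‖ ≤ ε) (hε0 : 0 ≤ ε) (hε1 : ε ≤ 1) (hβ : (μ / 2 + K + Bbar) * ε ≤ β)
    (hm : m < μ * r) (hmK : K * m ≤ μ ^ 2 / 4) (hβm : β ≤ m / 2) (hβK : K / μ ^ 2 * β ≤ 1 / 18)
    (h0 : ‖g (θ 0)‖ ≤ m) (k : ℕ) :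
    ‖θ k - θhat‖ ≤ μ / (2 * K) * (1 / 2) ^ 2 ^ k + 3 * β / μ := by
  have hregion : ∀ x, ‖g x‖ ≤ m → ‖x - θhat‖ < r ∧ μ * ‖x - θhat‖ ≤ ‖g x‖ := fun x hx =>
    hstrong.norm_sub_lt_of_norm_lt hμ hr hθhat hmono (hx.trans_lt hm)
  have hstep : ∀ k, ‖g (θ k)‖ ≤ m → ‖g (θ (k + 1))‖ ≤ K / μ ^ 2 * ‖g (θ k)‖ ^ 2 + β := by
    intro k hk
    have hball : θ k ∈ ball θhat r := mem_ball_iff_norm.2 (hregion _ hk).1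
    have hcoer := hstrong.le_inner_apply_of_hasFDerivAt (closedBall_mem_nhds_of_mem hball) (hg _)
    calc ‖g (θ (k + 1))‖ ≤ K * (‖g (θ k)‖ / μ + ‖N k‖) ^ 2 + ‖H (θ k)‖ * ‖N k‖ :=
          hθ k ▸ norm_newton_step_le hg hH hμ hcoer (N k)
      _ ≤ K * (‖g (θ k)‖ / μ + ε) ^ 2 + Bbar * ε := by
          gcongr
          exacts [hN k, (norm_nonneg _).trans (hHB 0), hHB _, hN k]
      _ ≤ K / μ ^ 2 * ‖g (θ k)‖ ^ 2 + (μ / 2 + K + Bbar) * ε :=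
          mul_div_add_sq_add_mul_le K.2 hμ ((mul_le_mul_of_nonneg_left hk K.2).trans hmK) hε0 hε1
      _ ≤ K / μ ^ 2 * ‖g (θ k)‖ ^ 2 + β := by gcongr
  have hbound : ∀ k, ‖g (θ k)‖ ≤ m := by
    refine le_of_le_mul_sq_add (by positivity) (fun k => norm_nonneg _) ?_ hβm h0 hstep
    rw [div_mul_eq_mul_div, div_le_iff₀ (by positivity)]
    linarith
  have hβ0 : 0 ≤ β := le_trans (by have := (norm_nonneg _).trans (hHB 0); positivity) hβ
  have hquad := le_half_pow_two_pow_of_le_sq_add (e := fun k => K / μ ^ 2 * ‖g (θ k)‖)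
    (fun k => by positivity) ?_ (by positivity) hβK (fun k => ?_) k
  · obtain ⟨-, hdist⟩ := hregion _ (hbound k)
    rw [pow_succ (1 / 2 : ℝ) (2 ^ k)] at hquad
    calc ‖θ k - θhat‖ ≤ ‖g (θ k)‖ / μ := (le_div_iff₀' hμ).2 hdist
      _ ≤ μ / (2 * K) * (1 / 2) ^ 2 ^ k + 3 * β / μ := by
        rw [div_le_iff₀ hμ]
        have hK' : (0 : ℝ) < K := hK
        field_simp at hquad ⊢
        nlinarith
  · calc K / μ ^ 2 * ‖g (θ 0)‖ ≤ K / μ ^ 2 * m := by gcongr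
      _ ≤ 1 / 4 := by rw [div_mul_eq_mul_div, div_le_iff₀ (by positivity)]; linarith
  · calc K / μ ^ 2 * ‖g (θ (k + 1))‖ ≤ K / μ ^ 2 * (K / μ ^ 2 * ‖g (θ k)‖ ^ 2 + β) := by
          gcongr; exact hstep k (hbound k)
      _ = (K / μ ^ 2 * ‖g (θ k)‖) ^ 2 + K / μ ^ 2 * β := by ring

end InnerProductSpace

theorem stmt_8_general (τ₁ B Bbar L₀ r : ℝ) (hτ₁ : 0 < τ₁) (hBbar : 0 < Bbar)
    (hL₀ : 0 < L₀) (hr : 0 < r) :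
    ∃ c C : ℝ, 0 < c ∧ 0 < C ∧
      ∀ (p : ℕ) (L : EuclideanSpace ℝ (Fin p) → ℝ)
        (H : EuclideanSpace ℝ (Fin p) → (EuclideanSpace ℝ (Fin p) →L[ℝ] EuclideanSpace ℝ (Fin p))),
        ContDiff ℝ 2 L →
        (∀ x, HasFDerivAt (gradient L) (H x) x) →
        (∀ (x u : EuclideanSpace ℝ (Fin p)), 0 ≤ ⟪u, H x u⟫) →
        (∀ x : EuclideanSpace ℝ (Fin p), ‖gradient L x‖ ≤ B) →
        (∀ x : EuclideanSpace ℝ (Fin p), ‖H x‖ ≤ Bbar) →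
        (∀ θ₁ θ₂ : EuclideanSpace ℝ (Fin p), ‖H θ₁ - H θ₂‖ ≤ L₀ * ‖θ₁ - θ₂‖) →
        ∀ θhat : EuclideanSpace ℝ (Fin p), gradient L θhat = 0 →
        (∀ θ₁ θ₂ : EuclideanSpace ℝ (Fin p), ‖θ₁ - θhat‖ ≤ r → ‖θ₂ - θhat‖ ≤ r →
          L θ₁ - L θ₂ ≥ ⟪gradient L θ₂, θ₁ - θ₂⟫ + τ₁ * ‖θ₁ - θ₂‖ ^ 2) →
        ∀ (θ N : ℕ → EuclideanSpace ℝ (Fin p)) (ε : ℝ),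
          ‖gradient L (θ 0)‖ ≤ min (τ₁ * r) (τ₁ ^ 2 / L₀) →
          (∀ k, θ (k + 1) = θ k - Ring.inverse (H (θ k)) (gradient L (θ k)) + N k) →
          (∀ k, ‖N k‖ ≤ ε) → 0 ≤ ε → ε ≤ c →
          ∀ K : ℕ, 1 ≤ K → ‖θ K - θhat‖ ≤ C * ((1 / 2 : ℝ) ^ 2 ^ K + ε) := by
  set μ := 2 * τ₁
  set m := min (τ₁ * r) (τ₁ ^ 2 / L₀)
  set b := μ / 2 + L₀ + Bbar
  have hm : 0 < m := lt_min (by positivity) (by positivity)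
  refine ⟨min 1 (min (m / (2 * b)) (1 / 18 / (L₀ / μ ^ 2 * b))), μ / (2 * L₀) + 3 * b / μ,
    by positivity, by positivity, ?_⟩
  intro p L H _ hH hPSD _ hHB hLip θhat hθhat hSC θ N ε h0 hθ hN hε0 hεc K _
  obtain ⟨hε1, hεm, hεK⟩ := le_min_iff.1 hεc |>.imp_right le_min_iff.1
  have hL : (L₀.toNNReal : ℝ) = L₀ := Real.coe_toNNReal _ hL₀.le
  have hLip' : LipschitzWith L₀.toNNReal H :=
    LipschitzWith.of_dist_le_mul fun x y => by rw [hL, dist_eq_norm, dist_eq_norm]; exact hLip x y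
  have hstrong : StrongMonotoneOn μ (gradient L) (closedBall θhat r) :=
    strongMonotoneOn_of_strongConvexOn fun x hx y hy =>
      hSC x y (mem_closedBall_iff_norm.1 hx) (mem_closedBall_iff_norm.1 hy)
  have hbound := norm_sub_le_of_noisyNewton (m := m) (β := b * ε) hH hLip' hHB
    (inner_sub_nonneg_of_hasFDerivAt hH hPSD) hstrong hθhat (by positivity)
    (by simpa using hL₀) hr hθ hN hε0 hε1 (by rw [hL]) ?_ ?_ ?_ ?_ h0 K
  · rw [hL] at hbound
    refine hbound.trans (le_of_sub_nonneg ?_)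
    ring_nf
    positivity
  · exact (min_le_left _ _).trans_lt (by nlinarith)
  · rw [hL]; nlinarith [(le_div_iff₀ hL₀).1 (min_le_right (τ₁ * r) (τ₁ ^ 2 / L₀))]
  · linarith [(le_div_iff₀ (by positivity)).1 hεm]
  · rw [hL]; linarith [(le_div_iff₀ (by positivity)).1 hεK]

/-- deterministic convergence content of Theorem 3 (noisy Newton method under local
strong convexity): if the noise perturbations of the Newton steps all have norm at most
`ε ≤ c`, then `‖θ^{(K)} - θ̂‖ ≤ C (2^{-2^K} + ε)` for every `K ≥ 1`. -/
theorem stmt_8 (τ₁ B Bbar L₀ r : ℝ) (hτ₁ : 0 < τ₁) (hB : 0 < B) (hBbar : 0 < Bbar)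
    (hL₀ : 0 < L₀) (hr : 0 < r) :
    ∃ c C : ℝ, 0 < c ∧ 0 < C ∧
      ∀ (p : ℕ) (L : EuclideanSpace ℝ (Fin p) → ℝ)
        (H : EuclideanSpace ℝ (Fin p) → (EuclideanSpace ℝ (Fin p) →L[ℝ] EuclideanSpace ℝ (Fin p))),
        ContDiff ℝ 2 L →
        (∀ x, HasFDerivAt (gradient L) (H x) x) →
        (∀ (x u : EuclideanSpace ℝ (Fin p)), 0 ≤ ⟪u, H x u⟫) →
        (∀ x : EuclideanSpace ℝ (Fin p), ‖gradient L x‖ ≤ B) →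
        (∀ x : EuclideanSpace ℝ (Fin p), ‖H x‖ ≤ Bbar) →
        (∀ θ₁ θ₂ : EuclideanSpace ℝ (Fin p), ‖H θ₁ - H θ₂‖ ≤ L₀ * ‖θ₁ - θ₂‖) →
        ∀ θhat : EuclideanSpace ℝ (Fin p), gradient L θhat = 0 →
        (∀ θ₁ θ₂ : EuclideanSpace ℝ (Fin p), ‖θ₁ - θhat‖ ≤ r → ‖θ₂ - θhat‖ ≤ r →
          L θ₁ - L θ₂ ≥ ⟪gradient L θ₂, θ₁ - θ₂⟫ + τ₁ * ‖θ₁ - θ₂‖ ^ 2) →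
        ∀ (θ N : ℕ → EuclideanSpace ℝ (Fin p)) (ε : ℝ),
          ‖gradient L (θ 0)‖ ≤ min (τ₁ * r) (τ₁ ^ 2 / L₀) →
          (∀ k, θ (k + 1) = θ k - Ring.inverse (H (θ k)) (gradient L (θ k)) + N k) →
          (∀ k, ‖N k‖ ≤ ε) → 0 ≤ ε → ε ≤ c →
          ∀ K : ℕ, 1 ≤ K → ‖θ K - θhat‖ ≤ C * ((1 / 2 : ℝ) ^ 2 ^ K + ε) :=
  stmt_8_general τ₁ B Bbar L₀ r hτ₁ hBbar hL₀ hr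
end

section
/- Let Θ₀ ⊆ ℝ^p be a convex set, let L : ℝ^p → ℝ be twice continuously differentiable, and let τ₀ ≥ 1. Suppose L satisfies τ₀-Hessian-stability on Θ₀, i.e. ‖θ₁ − θ₂‖²_{∇²L(θ₂)} ≤ τ₀ ‖θ₁ − θ₂‖²_{∇²L(θ₁)} for all θ₁, θ₂ ∈ Θ₀. Then for all θ₁, θ₂ ∈ Θ₀: L(θ₁) ≤ L(θ₂) + ⟨∇L(θ₂), θ₁ − θ₂⟩ + (τ₀/2)‖θ₁ − θ₂‖²_{∇²L(θ₂)}, and L(θ₁) ≥ L(θ₂) + ⟨∇L(θ₂), θ₁ − θ₂⟩ + (1/(2τ₀))‖θ₁ − θ₂‖²_{∇²L(θ₂)}. -/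
/-!
Restrict `L` to the segment `t ↦ θ₂ + t • (θ₁ - θ₂)`, `t ∈ [0, 1]`, which stays in `Θ₀` by
convexity. Its second derivative at `t` is the Hessian form of `θ₁ - θ₂` at the point of
parameter `t`. Hessian stability between that point and `θ₂` (the common factor `t²` cancels)
squeezes this between `Q / τ₀` and `τ₀ Q`, where `Q` is the form at `θ₂`. Integrating these
bounds twice over `[0, 1]` gives the two inequalities.
-/

open Set
open scoped RealInnerProductSpace

section SecondDerivative

variable {f f' f'' : ℝ → ℝ} {a b : ℝ}

theorem antitoneOn_Icc_of_hasDerivAt_nonpos (hf : ∀ t ∈ Icc a b, HasDerivAt f (f' t) t)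
    (hf' : ∀ t ∈ Ioo a b, f' t ≤ 0) : AntitoneOn f (Icc a b) := by
  refine antitoneOn_of_hasDerivWithinAt_nonpos (f' := f') (convex_Icc a b)
    (fun t ht => (hf t ht).continuousAt.continuousWithinAt) (fun t ht => ?_) ?_
  · rw [interior_Icc] at ht ⊢
    exact (hf t (Ioo_subset_Icc_self ht)).hasDerivWithinAt
  · rwa [interior_Icc]

theorem image_le_of_secondDeriv_le (hf : ∀ t ∈ Icc a b, HasDerivAt f (f' t) t)
    (hf' : ∀ t ∈ Icc a b, HasDerivAt f' (f'' t) t) (hab : a ≤ b) {C : ℝ}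
    (hC : ∀ t ∈ Ioo a b, f'' t ≤ C) :
    f b ≤ f a + f' a * (b - a) + C / 2 * (b - a) ^ 2 := by
  have hslope : AntitoneOn (fun t => f' t - C * t) (Icc a b) :=
    antitoneOn_Icc_of_hasDerivAt_nonpos (f' := fun t => f'' t - C)
      (fun t ht => ((hf' t ht).sub ((hasDerivAt_id t).const_mul C)).congr_deriv (by simp))
      (fun t ht => by linarith [hC t ht])
  have hgap : AntitoneOn (fun t => f t - f' a * t - C / 2 * (t - a) ^ 2) (Icc a b) := by
    refine antitoneOn_Icc_of_hasDerivAt_nonpos (f' := fun t => f' t - f' a - C * (t - a))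
      (fun t ht => ?_) (fun t ht => ?_)
    · have hsq := ((hasDerivAt_id t).sub_const a).pow 2 |>.const_mul (C / 2)
      refine (((hf t ht).sub ((hasDerivAt_id t).const_mul (f' a))).sub hsq).congr_deriv ?_
      simp only [id, Nat.cast_ofNat]
      ring
    · have := hslope (left_mem_Icc.2 hab) (Ioo_subset_Icc_self ht) ht.1.le
      simp only at this
      linarith
  have := hgap (left_mem_Icc.2 hab) (right_mem_Icc.2 hab) hab
  simp only [sub_self] at this
  linarith

theorem le_image_of_le_secondDeriv (hf : ∀ t ∈ Icc a b, HasDerivAt f (f' t) t)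
    (hf' : ∀ t ∈ Icc a b, HasDerivAt f' (f'' t) t) (hab : a ≤ b) {c : ℝ}
    (hc : ∀ t ∈ Ioo a b, c ≤ f'' t) :
    f a + f' a * (b - a) + c / 2 * (b - a) ^ 2 ≤ f b := by
  have := image_le_of_secondDeriv_le (f := fun t => -f t) (f' := fun t => -f' t)
    (f'' := fun t => -f'' t) (fun t ht => (hf t ht).neg) (fun t ht => (hf' t ht).neg) hab
    (C := -c) (fun t ht => neg_le_neg (hc t ht))
  linarith

end SecondDerivative

section InnerProductSpace

variable {E : Type*} [NormedAddCommGroup E] [InnerProductSpace ℝ E]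

theorem inner_smul_apply_smul (A : E →L[ℝ] E) (t : ℝ) (v : E) :
    ⟪t • v, A (t • v)⟫ = t ^ 2 * ⟪v, A v⟫ := by
  rw [map_smul, real_inner_smul_left, real_inner_smul_right]
  ring

theorem hasDerivAt_add_smul (x v : E) (t : ℝ) : HasDerivAt (fun s : ℝ => x + s • v) v t :=
  ((hasDerivAt_id t).smul_const v).const_add x |>.congr_deriv (one_smul ℝ v)

theorem hasDerivAt_inner_comp_add_smul {G : E → E} {A : E →L[ℝ] E} {x v : E} {t : ℝ}
    (hG : HasFDerivAt G A (x + t • v)) :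
    HasDerivAt (fun s : ℝ => ⟪G (x + s • v), v⟫) ⟪v, A v⟫ t := by
  have := (hG.comp_hasDerivAt t (hasDerivAt_add_smul x v t)).inner ℝ (hasDerivAt_const t v)
  rwa [inner_zero_right, zero_add, real_inner_comm] at this

theorem hasDerivAt_comp_add_smul [CompleteSpace E] {L : E → ℝ} {x v : E} {t : ℝ}
    (hL : DifferentiableAt ℝ L (x + t • v)) :
    HasDerivAt (fun s : ℝ => L (x + s • v)) ⟪gradient L (x + t • v), v⟫ t :=
  hL.hasGradientAt.hasFDerivAt.comp_hasDerivAt t (hasDerivAt_add_smul x v t)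
    |>.congr_deriv (by simp)

/-- With `H` the Hessian of `L`, `⟪v, H x v⟫` is the paper's `‖v‖²_{∇²L(x)}`. -/
def HessianStableOn (H : E → E →L[ℝ] E) (τ : ℝ) (s : Set E) : Prop :=
  ∀ x ∈ s, ∀ y ∈ s, ⟪x - y, H y (x - y)⟫ ≤ τ * ⟪x - y, H x (x - y)⟫

namespace HessianStableOn

variable {H : E → E →L[ℝ] E} {τ : ℝ} {s : Set E} {x y v : E} {t : ℝ}

theorem inner_le_of_sub_eq_smul (h : HessianStableOn H τ s) (hx : x ∈ s) (hy : y ∈ s)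
    (ht : t ≠ 0) (hxy : x - y = t • v) : ⟪v, H y v⟫ ≤ τ * ⟪v, H x v⟫ := by
  have := h x hx y hy
  rw [hxy, inner_smul_apply_smul, inner_smul_apply_smul, mul_left_comm] at this
  exact le_of_mul_le_mul_left this (pow_pos (abs_pos.2 ht) 2 |>.trans_eq (sq_abs t))

variable [CompleteSpace E] {L : E → ℝ}

theorem le_add_inner_gradient_add (h : HessianStableOn H τ s) (hs : Convex ℝ s)
    (hL : ∀ z ∈ s, DifferentiableAt ℝ L z)
    (hH : ∀ z ∈ s, HasFDerivAt (gradient L) (H z) z)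
    (hx : x ∈ s) (hy : y ∈ s) :
    L y ≤ L x + ⟪gradient L x, y - x⟫ + τ / 2 * ⟪y - x, H x (y - x)⟫ := by
  have hseg : ∀ t ∈ Icc (0 : ℝ) 1, x + t • (y - x) ∈ s := fun t ht =>
    hs.add_smul_sub_mem hx hy ht
  have := image_le_of_secondDeriv_le (f := fun t => L (x + t • (y - x)))
    (fun t ht => hasDerivAt_comp_add_smul (hL _ (hseg t ht)))
    (fun t ht => hasDerivAt_inner_comp_add_smul (hH _ (hseg t ht))) zero_le_one
    (fun t ht => h.inner_le_of_sub_eq_smul hx (hseg t (Ioo_subset_Icc_self ht))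
      (neg_ne_zero.2 ht.1.ne') (by rw [neg_smul, sub_add_cancel_left]))
  simp only [zero_smul, add_zero, one_smul, add_sub_cancel, sub_zero, mul_one, one_pow] at this
  linarith

theorem add_inner_gradient_add_le (h : HessianStableOn H τ s) (hτ : 0 < τ)
    (hs : Convex ℝ s) (hL : ∀ z ∈ s, DifferentiableAt ℝ L z)
    (hH : ∀ z ∈ s, HasFDerivAt (gradient L) (H z) z)
    (hx : x ∈ s) (hy : y ∈ s) :
    L x + ⟪gradient L x, y - x⟫ + 1 / (2 * τ) * ⟪y - x, H x (y - x)⟫ ≤ L y := by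
  have hseg : ∀ t ∈ Icc (0 : ℝ) 1, x + t • (y - x) ∈ s := fun t ht =>
    hs.add_smul_sub_mem hx hy ht
  have := le_image_of_le_secondDeriv (f := fun t => L (x + t • (y - x)))
    (fun t ht => hasDerivAt_comp_add_smul (hL _ (hseg t ht)))
    (fun t ht => hasDerivAt_inner_comp_add_smul (hH _ (hseg t ht))) zero_le_one
    (c := ⟪y - x, H x (y - x)⟫ / τ) (fun t ht => (div_le_iff₀' hτ).2 <|
      h.inner_le_of_sub_eq_smul (hseg t (Ioo_subset_Icc_self ht)) hx ht.1.ne'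
        (add_sub_cancel_left _ _))
  simp only [zero_smul, add_zero, one_smul, add_sub_cancel, sub_zero, mul_one, one_pow] at this
  rwa [one_div_mul_eq_div, mul_comm, ← div_div]

end HessianStableOn

end InnerProductSpace

/-- under `τ₀`-Hessian stability on a convex set `Θ₀`, one obtains upper and lower
second-order Taylor-type bounds with factors `τ₀/2` and `1/(2τ₀)` (Lemma `LemA` of the paper). -/
theorem stmt_9 {p : ℕ} (Θ₀ : Set (EuclideanSpace ℝ (Fin p))) (hΘ₀ : Convex ℝ Θ₀)
    (L : EuclideanSpace ℝ (Fin p) → ℝ) (hC2 : ContDiff ℝ 2 L)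
    (H : EuclideanSpace ℝ (Fin p) → (EuclideanSpace ℝ (Fin p) →L[ℝ] EuclideanSpace ℝ (Fin p)))
    (hH : ∀ x, HasFDerivAt (gradient L) (H x) x)
    (τ₀ : ℝ) (hτ₀ : 1 ≤ τ₀)
    (hstab : ∀ θ₁ ∈ Θ₀, ∀ θ₂ ∈ Θ₀,
      ⟪θ₁ - θ₂, H θ₂ (θ₁ - θ₂)⟫ ≤ τ₀ * ⟪θ₁ - θ₂, H θ₁ (θ₁ - θ₂)⟫) :
    ∀ θ₁ ∈ Θ₀, ∀ θ₂ ∈ Θ₀,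
      L θ₁ ≤ L θ₂ + ⟪gradient L θ₂, θ₁ - θ₂⟫ + τ₀ / 2 * ⟪θ₁ - θ₂, H θ₂ (θ₁ - θ₂)⟫ ∧
      L θ₁ ≥ L θ₂ + ⟪gradient L θ₂, θ₁ - θ₂⟫ + 1 / (2 * τ₀) * ⟪θ₁ - θ₂, H θ₂ (θ₁ - θ₂)⟫ := by
  intro θ₁ h₁ θ₂ h₂
  have hstable : HessianStableOn H τ₀ Θ₀ := hstab
  have hL : ∀ z ∈ Θ₀, DifferentiableAt ℝ L z := fun z _ => hC2.differentiable (by norm_num) z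
  exact ⟨hstable.le_add_inner_gradient_add hΘ₀ hL (fun z _ => hH z) h₂ h₁,
    hstable.add_inner_gradient_add_le (by linarith) hΘ₀ hL (fun z _ => hH z) h₂ h₁⟩
end

section
/- Let L : ℝ^p → ℝ be three times continuously differentiable and (γ,2)-self-concordant. Then: (i) for every θ₀ ∈ ℝ^p and r > 0, inf over θ with ‖θ − θ₀‖₂ ≤ r of λ_min(∇²L(θ)) is at least exp(−γr)·λ_min(∇²L(θ₀)); and (ii) for every set Θ₀ ⊆ ℝ^p of diameter at most D, one has ‖θ₁ − θ₂‖²_{∇²L(θ₂)} ≤ exp(γD)·‖θ₁ − θ₂‖²_{∇²L(θ₁)} for all θ₁, θ₂ ∈ Θ₀; moreover if ∇²L(θ₀) is positive definite for some θ₀ ∈ Θ₀, then ∇²L(θ) is positive definite for every θ ∈ Θ₀. -/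
/-!
Along the segment `t ↦ x + t v` the Hessian form `g t = ∇²f(x + t v)[u,u]` has derivative
`∇³f(x + t v)[v,u,u]`, which self-concordance bounds in absolute value by `γ ‖v‖ g t`.
Hence `t ↦ exp (γ ‖v‖ t) g t` is monotone (Grönwall), so moving a distance `r` changes the
Hessian form by a factor in `[exp (-γ r), exp (γ r)]`. Both parts of the theorem follow, the
smallest eigenvalue being an infimum of Hessian forms.
-/

open scoped RealInnerProductSpace

/-- The smallest eigenvalue of the Hessian of `L` at `θ`, defined as the infimum of the Hessian
quadratic form `∇²L(θ)[u,u]` over the unit sphere. -/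
noncomputable def hessLambdaMin {p : ℕ} (L : EuclideanSpace ℝ (Fin p) → ℝ)
    (θ : EuclideanSpace ℝ (Fin p)) : ℝ :=
  ⨅ u : Metric.sphere (0 : EuclideanSpace ℝ (Fin p)) 1, iteratedFDeriv ℝ 2 L θ ![u.1, u.1]

open Real

section SelfConcordant

variable {E F : Type*} [NormedAddCommGroup E] [NormedSpace ℝ E]
  [NormedAddCommGroup F] [NormedSpace ℝ F]

/-- `(γ, 2)`-self-concordance. -/
def IsSelfConcordant (γ : ℝ) (f : E → ℝ) : Prop :=
  ∀ x u v : E, |iteratedFDeriv ℝ 3 f x ![v, u, u]| ≤ γ * iteratedFDeriv ℝ 2 f x ![u, u] * ‖v‖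

theorem hasDerivAt_iteratedFDeriv_add_smul {n : ℕ} {f : E → F} (hf : ContDiff ℝ (n + 1) f)
    (x v : E) (m : Fin n → E) (t : ℝ) :
    HasDerivAt (fun t : ℝ => iteratedFDeriv ℝ n f (x + t • v) m)
      (iteratedFDeriv ℝ (n + 1) f (x + t • v) (Fin.cons v m)) t := by
  have hline : HasDerivAt (fun t : ℝ => x + t • v) v t := by
    simpa using ((hasDerivAt_id t).smul_const v).const_add x
  have hD : HasFDerivAt (iteratedFDeriv ℝ n f) (fderiv ℝ (iteratedFDeriv ℝ n f) (x + t • v))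
      (x + t • v) :=
    ((hf.iteratedFDeriv_right (m := 1) (add_comm _ _).le).differentiable one_ne_zero _).hasFDerivAt
  rw [iteratedFDeriv_succ_apply_left]
  exact (ContinuousMultilinearMap.apply ℝ (fun _ : Fin n => E) F m).hasFDerivAt.comp_hasDerivAt t
    (hD.comp_hasDerivAt t hline)

namespace IsSelfConcordant

variable {γ : ℝ} {f : E → ℝ}

theorem iteratedFDeriv_two_nonneg (hf : IsSelfConcordant γ f) (hγ : 0 < γ) (x u : E) :
    0 ≤ iteratedFDeriv ℝ 2 f x ![u, u] := by
  rcases eq_or_ne u 0 with rfl | hu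
  · exact (ContinuousMultilinearMap.map_coord_zero _ (0 : Fin 2) rfl).ge
  · have h : 0 ≤ iteratedFDeriv ℝ 2 f x ![u, u] * (γ * ‖u‖) := by
      linarith [abs_nonneg (iteratedFDeriv ℝ 3 f x ![u, u, u]), hf x u u]
    exact nonneg_of_mul_nonneg_left h (mul_pos hγ (norm_pos_iff.mpr hu))

theorem iteratedFDeriv_two_le_exp_mul (hf : IsSelfConcordant γ f) (hC3 : ContDiff ℝ 3 f)
    (x v u : E) :
    iteratedFDeriv ℝ 2 f x ![u, u] ≤ exp (γ * ‖v‖) * iteratedFDeriv ℝ 2 f (x + v) ![u, u] := by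
  set c := γ * ‖v‖
  set g : ℝ → ℝ := fun t => iteratedFDeriv ℝ 2 f (x + t • v) ![u, u]
  set g' : ℝ → ℝ := fun t => iteratedFDeriv ℝ 3 f (x + t • v) ![v, u, u]
  have hg : ∀ t, HasDerivAt g (g' t) t := hasDerivAt_iteratedFDeriv_add_smul hC3 x v _
  have hh : ∀ t, HasDerivAt (fun t => exp (c * t) * g t) (exp (c * t) * (c * g t + g' t)) t :=
    fun t => by
      have he : HasDerivAt (fun t => exp (c * t)) (exp (c * t) * c) t := by
        simpa using ((hasDerivAt_id t).const_mul c).exp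
      exact (he.mul (hg t)).congr_deriv (by ring)
  have hmono : Monotone fun t => exp (c * t) * g t := by
    refine monotone_of_deriv_nonneg (fun t => (hh t).differentiableAt) fun t => ?_
    rw [(hh t).deriv]
    have hg' : -(c * g t) ≤ g' t := by
      have := hf (x + t • v) u v
      linarith [neg_abs_le (g' t)]
    exact mul_nonneg (exp_pos _).le (by linarith)
  simpa [g] using hmono zero_le_one

theorem iteratedFDeriv_two_le_exp_mul_of_norm_sub_le (hf : IsSelfConcordant γ f) (hγ : 0 < γ)
    (hC3 : ContDiff ℝ 3 f) {x y : E} {r : ℝ} (hr : ‖y - x‖ ≤ r) (u : E) :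
    iteratedFDeriv ℝ 2 f x ![u, u] ≤ exp (γ * r) * iteratedFDeriv ℝ 2 f y ![u, u] := by
  calc iteratedFDeriv ℝ 2 f x ![u, u]
      ≤ exp (γ * ‖y - x‖) * iteratedFDeriv ℝ 2 f y ![u, u] := by
        simpa using hf.iteratedFDeriv_two_le_exp_mul hC3 x (y - x) u
    _ ≤ exp (γ * r) * iteratedFDeriv ℝ 2 f y ![u, u] := by
        gcongr
        exact hf.iteratedFDeriv_two_nonneg hγ y u

end IsSelfConcordant

end SelfConcordant

theorem mul_hessLambdaMin_le {p : ℕ} {L : EuclideanSpace ℝ (Fin p) → ℝ}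
    {θ₀ θ : EuclideanSpace ℝ (Fin p)} {c : ℝ} (hc : 0 ≤ c)
    (h₀ : ∀ u, 0 ≤ iteratedFDeriv ℝ 2 L θ₀ ![u, u])
    (h : ∀ u, c * iteratedFDeriv ℝ 2 L θ₀ ![u, u] ≤ iteratedFDeriv ℝ 2 L θ ![u, u]) :
    c * hessLambdaMin L θ₀ ≤ hessLambdaMin L θ := by
  rw [hessLambdaMin, Real.mul_iInf_of_nonneg hc]
  exact ciInf_mono ⟨0, by rintro _ ⟨u, rfl⟩; exact mul_nonneg hc (h₀ u)⟩ fun u => h u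

theorem stmt_10_general {p : ℕ} (γ : ℝ) (hγ : 0 < γ)
    (L : EuclideanSpace ℝ (Fin p) → ℝ) (hC3 : ContDiff ℝ 3 L)
    (hSC : ∀ x u v : EuclideanSpace ℝ (Fin p),
      |iteratedFDeriv ℝ 3 L x ![v, u, u]| ≤ γ * iteratedFDeriv ℝ 2 L x ![u, u] * ‖v‖) :
    (∀ (θ₀ : EuclideanSpace ℝ (Fin p)) (r : ℝ), 0 < r →
      ∀ θ : EuclideanSpace ℝ (Fin p), ‖θ - θ₀‖ ≤ r →
        Real.exp (-(γ * r)) * hessLambdaMin L θ₀ ≤ hessLambdaMin L θ) ∧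
    (∀ (Θ₀ : Set (EuclideanSpace ℝ (Fin p))) (D : ℝ),
      (∀ a ∈ Θ₀, ∀ b ∈ Θ₀, ‖a - b‖ ≤ D) →
      (∀ θ₁ ∈ Θ₀, ∀ θ₂ ∈ Θ₀,
        iteratedFDeriv ℝ 2 L θ₂ ![θ₁ - θ₂, θ₁ - θ₂] ≤
          Real.exp (γ * D) * iteratedFDeriv ℝ 2 L θ₁ ![θ₁ - θ₂, θ₁ - θ₂]) ∧
      (∀ θ₀' ∈ Θ₀,
        (∀ u : EuclideanSpace ℝ (Fin p), u ≠ 0 → 0 < iteratedFDeriv ℝ 2 L θ₀' ![u, u]) →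
        ∀ θ ∈ Θ₀, ∀ u : EuclideanSpace ℝ (Fin p), u ≠ 0 →
          0 < iteratedFDeriv ℝ 2 L θ ![u, u])) := by
  have hL : IsSelfConcordant γ L := hSC
  refine ⟨fun θ₀ r _ θ hθ => ?_, fun Θ₀ D hdiam => ⟨fun θ₁ h₁ θ₂ h₂ => ?_, ?_⟩⟩
  · refine mul_hessLambdaMin_le (exp_pos _).le (hL.iteratedFDeriv_two_nonneg hγ θ₀) fun u => ?_
    rw [exp_neg, inv_mul_le_iff₀ (exp_pos _)]
    exact hL.iteratedFDeriv_two_le_exp_mul_of_norm_sub_le hγ hC3 hθ u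
  · exact hL.iteratedFDeriv_two_le_exp_mul_of_norm_sub_le hγ hC3 (hdiam θ₁ h₁ θ₂ h₂) _
  · intro θ₀ h₀ hpd θ hθ u hu
    have h := hL.iteratedFDeriv_two_le_exp_mul_of_norm_sub_le hγ hC3 (hdiam θ hθ θ₀ h₀) u
    exact pos_of_mul_pos_right ((hpd u hu).trans_le h) (exp_pos _).le

/-- stability properties of `(γ,2)`-self-concordant functions:
(i) the smallest Hessian eigenvalue decays by at most `exp(-γ r)` over a ball of radius `r`;
(ii) on a set of diameter `D` the Hessian quadratic forms are `exp(γ D)`-stable, and positive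
definiteness of the Hessian at one point propagates to the whole set. -/
theorem stmt_10 {p : ℕ} (hp : 1 ≤ p) (γ : ℝ) (hγ : 0 < γ)
    (L : EuclideanSpace ℝ (Fin p) → ℝ) (hC3 : ContDiff ℝ 3 L)
    (hSC : ∀ x u v : EuclideanSpace ℝ (Fin p),
      |iteratedFDeriv ℝ 3 L x ![v, u, u]| ≤ γ * iteratedFDeriv ℝ 2 L x ![u, u] * ‖v‖) :
    (∀ (θ₀ : EuclideanSpace ℝ (Fin p)) (r : ℝ), 0 < r →
      ∀ θ : EuclideanSpace ℝ (Fin p), ‖θ - θ₀‖ ≤ r →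
        Real.exp (-(γ * r)) * hessLambdaMin L θ₀ ≤ hessLambdaMin L θ) ∧
    (∀ (Θ₀ : Set (EuclideanSpace ℝ (Fin p))) (D : ℝ),
      (∀ a ∈ Θ₀, ∀ b ∈ Θ₀, ‖a - b‖ ≤ D) →
      (∀ θ₁ ∈ Θ₀, ∀ θ₂ ∈ Θ₀,
        iteratedFDeriv ℝ 2 L θ₂ ![θ₁ - θ₂, θ₁ - θ₂] ≤
          Real.exp (γ * D) * iteratedFDeriv ℝ 2 L θ₁ ![θ₁ - θ₂, θ₁ - θ₂]) ∧
      (∀ θ₀' ∈ Θ₀,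
        (∀ u : EuclideanSpace ℝ (Fin p), u ≠ 0 → 0 < iteratedFDeriv ℝ 2 L θ₀' ![u, u]) →
        ∀ θ ∈ Θ₀, ∀ u : EuclideanSpace ℝ (Fin p), u ≠ 0 →
          0 < iteratedFDeriv ℝ 2 L θ ![u, u])) :=
  stmt_10_general γ hγ L hC3 hSC
end

section
/- Let L : ℝ^p → ℝ be three times continuously differentiable and (γ,2)-self-concordant, and let θ̂ be a global minimizer of L with ∇L(θ̂) = 0. Then for every θ ∈ ℝ^p, writing R = ‖θ − θ̂‖₂: λ_min(∇²L(θ̂)) · (exp(−γR) + γR − 1) ≤ γ² (L(θ) − L(θ̂)). -/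
open scoped RealInnerProductSpace

open Real

lemma apply_zero_le_of_hasDerivAt_nonneg {f f' : ℝ → ℝ} (hf : ∀ t, HasDerivAt f (f' t) t)
    (hf' : ∀ t, 0 < t → 0 ≤ f' t) {t : ℝ} (ht : 0 ≤ t) : f 0 ≤ f t :=
  monotoneOn_of_hasDerivWithinAt_nonneg (convex_Ici 0)
    (fun s _ => (hf s).continuousAt.continuousWithinAt) (fun s _ => (hf s).hasDerivWithinAt)
    (fun s hs => hf' s (by simpa using hs)) Set.self_mem_Ici ht ht

lemma hasDerivAt_exp_mul (γ t : ℝ) :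
    HasDerivAt (fun t => exp (γ * t)) (γ * exp (γ * t)) t := by
  simpa [mul_comm] using ((hasDerivAt_id t).const_mul γ).exp

section SelfConcordantLine

variable {γ : ℝ} {g g₁ g₂ g₃ : ℝ → ℝ}

lemma mul_exp_neg_le_of_abs_deriv_le (hg₂ : ∀ t, HasDerivAt g₂ (g₃ t) t)
    (hg₃ : ∀ t, |g₃ t| ≤ γ * g₂ t) {t : ℝ} (ht : 0 ≤ t) :
    g₂ 0 * exp (-(γ * t)) ≤ g₂ t := by
  have hψ : g₂ 0 ≤ g₂ t * exp (γ * t) := by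
    simpa using apply_zero_le_of_hasDerivAt_nonneg
      (fun s => (hg₂ s).mul (hasDerivAt_exp_mul γ s))
      (fun s _ => by nlinarith [neg_le_of_abs_le (hg₃ s), exp_pos (γ * s)]) ht
  calc g₂ 0 * exp (-(γ * t)) ≤ g₂ t * exp (γ * t) * exp (-(γ * t)) := by gcongr
    _ = g₂ t := by rw [mul_assoc, ← exp_add, add_neg_cancel, exp_zero, mul_one]

lemma mul_one_sub_exp_neg_le_of_abs_deriv_le (hγ : 0 ≤ γ) (hg₁ : ∀ t, HasDerivAt g₁ (g₂ t) t)
    (hg₂ : ∀ t, HasDerivAt g₂ (g₃ t) t) (hg₃ : ∀ t, |g₃ t| ≤ γ * g₂ t) {t : ℝ} (ht : 0 ≤ t) :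
    g₂ 0 * (1 - exp (-(γ * t))) ≤ γ * (g₁ t - g₁ 0) := by
  have hχ := apply_zero_le_of_hasDerivAt_nonneg
    (f := fun s => γ * g₁ s + g₂ 0 * exp (-γ * s))
    (fun s => ((hg₁ s).const_mul γ).add ((hasDerivAt_exp_mul (-γ) s).const_mul (g₂ 0)))
    (fun s hs => by
      have := mul_exp_neg_le_of_abs_deriv_le hg₂ hg₃ hs.le
      simp only [neg_mul]
      nlinarith [mul_nonneg hγ (sub_nonneg.2 this)]) ht
  simp only [neg_mul, mul_zero, exp_zero] at hχ
  linarith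

theorem mul_exp_neg_add_sub_one_le_of_abs_deriv_le (hγ : 0 ≤ γ)
    (hg : ∀ t, HasDerivAt g (g₁ t) t) (hg₁ : ∀ t, HasDerivAt g₁ (g₂ t) t)
    (hg₂ : ∀ t, HasDerivAt g₂ (g₃ t) t) (hg₃ : ∀ t, |g₃ t| ≤ γ * g₂ t) {t : ℝ} (ht : 0 ≤ t) :
    g₂ 0 * (exp (-(γ * t)) + γ * t - 1) ≤ γ ^ 2 * (g t - g 0 - g₁ 0 * t) := by
  have hω := apply_zero_le_of_hasDerivAt_nonneg
    (f := fun s => γ ^ 2 * (g s - g₁ 0 * s) - g₂ 0 * (exp (-γ * s) + γ * s))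
    (fun s => (((hg s).sub ((hasDerivAt_id s).const_mul (g₁ 0))).const_mul (γ ^ 2)).sub
      (((hasDerivAt_exp_mul (-γ) s).add ((hasDerivAt_id s).const_mul γ)).const_mul (g₂ 0)))
    (fun s hs => by
      have := mul_one_sub_exp_neg_le_of_abs_deriv_le hγ hg₁ hg₂ hg₃ hs.le
      simp only [neg_mul, mul_one]
      nlinarith [mul_nonneg hγ (sub_nonneg.2 this)]) ht
  simp only [neg_mul, mul_zero, exp_zero, sub_zero, add_zero] at hω
  linarith

end SelfConcordantLine

lemma hasDerivAt_iteratedFDeriv_line {E F : Type*} [NormedAddCommGroup E] [NormedSpace ℝ E]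
    [NormedAddCommGroup F] [NormedSpace ℝ F] {n : ℕ} {L : E → F} (hL : ContDiff ℝ (n + 1) L)
    (x u : E) (m : Fin n → E) (t : ℝ) :
    HasDerivAt (fun t : ℝ => iteratedFDeriv ℝ n L (x + t • u) m)
      (iteratedFDeriv ℝ (n + 1) L (x + t • u) (Fin.cons u m)) t := by
  have hline : HasDerivAt (fun t : ℝ => x + t • u) u t := by
    simpa using ((hasDerivAt_id t).smul_const u).const_add x
  have hD := (hL.differentiable_iteratedFDeriv (by exact_mod_cast n.lt_succ_self) (x + t • u))
  exact ((ContinuousMultilinearMap.apply ℝ (fun _ => E) F m).hasFDerivAt.comp _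
    hD.hasFDerivAt).comp_hasDerivAt t hline

lemma mul_exp_neg_add_sub_one_le_of_abs_iteratedFDeriv_le {E : Type*} [NormedAddCommGroup E]
    [NormedSpace ℝ E] {L : E → ℝ} (hL : ContDiff ℝ 3 L) {γ : ℝ} (hγ : 0 ≤ γ) (x u : E)
    (hSC : ∀ t : ℝ, |iteratedFDeriv ℝ 3 L (x + t • u) ![u, u, u]| ≤
      γ * iteratedFDeriv ℝ 2 L (x + t • u) ![u, u]) {t : ℝ} (ht : 0 ≤ t) :
    iteratedFDeriv ℝ 2 L x ![u, u] * (exp (-(γ * t)) + γ * t - 1) ≤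
      γ ^ 2 * (L (x + t • u) - L x - iteratedFDeriv ℝ 1 L x ![u] * t) := by
  have hd₀ : ∀ t, HasDerivAt (fun t : ℝ => L (x + t • u))
      (iteratedFDeriv ℝ 1 L (x + t • u) ![u]) t := by
    have := hasDerivAt_iteratedFDeriv_line (hL.of_le (by norm_num)) x u ![]
    simp only [iteratedFDeriv_zero_apply] at this
    exact this
  have hd₁ : ∀ t, HasDerivAt (fun t : ℝ => iteratedFDeriv ℝ 1 L (x + t • u) ![u])
      (iteratedFDeriv ℝ 2 L (x + t • u) ![u, u]) t :=
    hasDerivAt_iteratedFDeriv_line (hL.of_le (by norm_num)) x u ![u]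
  have hd₂ : ∀ t, HasDerivAt (fun t : ℝ => iteratedFDeriv ℝ 2 L (x + t • u) ![u, u])
      (iteratedFDeriv ℝ 3 L (x + t • u) ![u, u, u]) t :=
    hasDerivAt_iteratedFDeriv_line hL x u ![u, u]
  simpa only [zero_smul, add_zero] using
    mul_exp_neg_add_sub_one_le_of_abs_deriv_le hγ hd₀ hd₁ hd₂ hSC ht

lemma hessLambdaMin_le {p : ℕ} {L : EuclideanSpace ℝ (Fin p) → ℝ} {θ u : EuclideanSpace ℝ (Fin p)}
    (hL : ∀ w, 0 ≤ iteratedFDeriv ℝ 2 L θ ![w, w]) (hu : ‖u‖ = 1) :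
    hessLambdaMin L θ ≤ iteratedFDeriv ℝ 2 L θ ![u, u] :=
  ciInf_le ⟨0, by rintro _ ⟨w, rfl⟩; exact hL w⟩
    (⟨u, by simpa using hu⟩ : Metric.sphere (0 : EuclideanSpace ℝ (Fin p)) 1)

theorem stmt_11_general {p : ℕ} (γ : ℝ) (hγ : 0 < γ)
    (L : EuclideanSpace ℝ (Fin p) → ℝ) (hC3 : ContDiff ℝ 3 L)
    (hSC : ∀ x u v : EuclideanSpace ℝ (Fin p),
      |iteratedFDeriv ℝ 3 L x ![v, u, u]| ≤ γ * iteratedFDeriv ℝ 2 L x ![u, u] * ‖v‖)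
    (θhat : EuclideanSpace ℝ (Fin p))
    (hcrit : gradient L θhat = 0)
    (θ : EuclideanSpace ℝ (Fin p)) :
    hessLambdaMin L θhat * (Real.exp (-(γ * ‖θ - θhat‖)) + γ * ‖θ - θhat‖ - 1) ≤
      γ ^ 2 * (L θ - L θhat) := by
  rcases (norm_nonneg (θ - θhat)).eq_or_lt with hR | hR
  · obtain rfl : θ = θhat := sub_eq_zero.mp (norm_eq_zero.mp hR.symm)
    simp
  set R := ‖θ - θhat‖
  set u := R⁻¹ • (θ - θhat)
  have hu : ‖u‖ = 1 := by rw [norm_smul, norm_inv, norm_norm, inv_mul_cancel₀ hR.ne']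
  have hθ : θhat + R • u = θ := by rw [smul_inv_smul₀ hR.ne', add_sub_cancel]
  have hSC_unit : ∀ x w,
      |iteratedFDeriv ℝ 3 L x ![u, w, w]| ≤ γ * iteratedFDeriv ℝ 2 L x ![w, w] :=
    fun x w => by simpa [hu] using hSC x w u
  have hHess : ∀ x w, 0 ≤ iteratedFDeriv ℝ 2 L x ![w, w] :=
    fun x w => nonneg_of_mul_nonneg_right ((abs_nonneg _).trans (hSC_unit x w)) hγ
  have hgrad : iteratedFDeriv ℝ 1 L θhat ![u] = 0 := by
    simp [iteratedFDeriv_one_apply, ← toDual_gradient, hcrit]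
  have hline := mul_exp_neg_add_sub_one_le_of_abs_iteratedFDeriv_le hC3 hγ.le θhat u
    (fun t => hSC_unit _ u) hR.le
  rw [hgrad, zero_mul, sub_zero, hθ] at hline
  calc hessLambdaMin L θhat * (exp (-(γ * R)) + γ * R - 1)
      ≤ iteratedFDeriv ℝ 2 L θhat ![u, u] * (exp (-(γ * R)) + γ * R - 1) := by
        gcongr
        · linarith [add_one_le_exp (-(γ * R))]
        · exact hessLambdaMin_le (hHess θhat) hu
    _ ≤ γ ^ 2 * (L θ - L θhat) := hline

/-- for a `(γ,2)`-self-concordant function with global minimizer `θ̂`,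
`λ_min(∇²L(θ̂)) (e^{-γR} + γR - 1) ≤ γ² (L(θ) - L(θ̂))` with `R = ‖θ - θ̂‖`
(the paper's Lemma B4). -/
theorem stmt_11 {p : ℕ} (hp : 1 ≤ p) (γ : ℝ) (hγ : 0 < γ)
    (L : EuclideanSpace ℝ (Fin p) → ℝ) (hC3 : ContDiff ℝ 3 L)
    (hSC : ∀ x u v : EuclideanSpace ℝ (Fin p),
      |iteratedFDeriv ℝ 3 L x ![v, u, u]| ≤ γ * iteratedFDeriv ℝ 2 L x ![u, u] * ‖v‖)
    (θhat : EuclideanSpace ℝ (Fin p)) (hmin : ∀ θ, L θhat ≤ L θ)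
    (hcrit : gradient L θhat = 0)
    (θ : EuclideanSpace ℝ (Fin p)) :
    hessLambdaMin L θhat * (Real.exp (-(γ * ‖θ - θhat‖)) + γ * ‖θ - θhat‖ - 1) ≤
      γ ^ 2 * (L θ - L θhat) :=
  stmt_11_general γ hγ L hC3 hSC θhat hcrit θ
end

section
/- Let n ≥ 1, γ > 0, let y₁, …, yₙ ∈ ℝ, x₁, …, xₙ ∈ ℝ^p, and let w₁, …, wₙ ≥ 0. Let ρ : ℝ × ℝ → ℝ be such that for each a ∈ ℝ the function t ↦ ρ(a,t) is three times continuously differentiable and satisfies |∂³_t ρ(a,t)| ≤ γ ∂²_t ρ(a,t) for all t ∈ ℝ. Define the Mallows loss L(θ) = (1/n) Σᵢ ρ(yᵢ, ⟨xᵢ, θ⟩) wᵢ for θ ∈ ℝ^p. Then L is (γ·maxᵢ‖xᵢ‖₂, 2)-self-concordant, i.e. |∇³L(θ)[v,u,u]| ≤ γ·(maxᵢ‖xᵢ‖₂)·(uᵀ∇²L(θ)u)·‖v‖₂ for all θ, u, v ∈ ℝ^p. -/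
open scoped RealInnerProductSpace

/-! A summand `g ⟪a, θ⟫` contributes `⟪a, v⟫ ⟪a, u⟫² g'''` to `∇³L(θ)[v, u, u]` and
`⟪a, u⟫² g''` to `∇²L(θ)[u, u]`, so `|⟪a, v⟫| ≤ ‖a‖ ‖v‖` and `|g'''| ≤ γ g''` make each summand
`(γ ‖a‖)`-self-concordant. Self-concordance with a common constant survives sums, and the
nonnegative weights `wᵢ / n` are absorbed into the univariate functions. -/

section SelfConcordant

variable {E : Type*} [NormedAddCommGroup E] [InnerProductSpace ℝ E]

def SelfConcordant (γ : ℝ) (f : E → ℝ) : Prop :=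
  ∀ θ u v : E, |iteratedFDeriv ℝ 3 f θ ![v, u, u]| ≤ γ * iteratedFDeriv ℝ 2 f θ ![u, u] * ‖v‖

theorem SelfConcordant.sum {ι : Type*} [Fintype ι] {γ : ℝ} {f : ι → E → ℝ}
    (hf : ∀ i, ContDiff ℝ 3 (f i)) (hsc : ∀ i, SelfConcordant γ (f i)) :
    SelfConcordant γ (fun θ => ∑ i, f i θ) := by
  intro θ u v
  rw [iteratedFDeriv_sum fun i _ => hf i, iteratedFDeriv_sum fun i _ => (hf i).of_le (by norm_num)]
  simp only [Finset.sum_apply, sum_apply, Finset.mul_sum, Finset.sum_mul]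
  exact (Finset.abs_sum_le_sum_abs _ _).trans (Finset.sum_le_sum fun i _ => hsc i θ u v)

theorem iteratedFDeriv_comp_inner_apply {g : ℝ → ℝ} {k : ℕ} (hg : ContDiff ℝ k g) (a θ : E)
    (m : Fin k → E) :
    iteratedFDeriv ℝ k (fun θ => g ⟪a, θ⟫) θ m = (∏ j, ⟪a, m j⟫) * iteratedDeriv k g ⟪a, θ⟫ := by
  have := (innerSL ℝ a).iteratedFDeriv_comp_right hg θ le_rfl
  simp only [Function.comp_def, innerSL_apply_apply] at this
  rw [this, ContinuousMultilinearMap.compContinuousLinearMap_apply,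
    iteratedFDeriv_apply_eq_iteratedDeriv_mul_prod, smul_eq_mul]
  simp only [innerSL_apply_apply]

theorem selfConcordant_comp_inner {γ M : ℝ} {g : ℝ → ℝ} (hg : ContDiff ℝ 3 g)
    (hsc : ∀ t, |iteratedDeriv 3 g t| ≤ γ * iteratedDeriv 2 g t) {a : E} (ha : ‖a‖ ≤ M) :
    SelfConcordant (γ * M) (fun θ => g ⟪a, θ⟫) := by
  intro θ u v
  rw [iteratedFDeriv_comp_inner_apply hg, iteratedFDeriv_comp_inner_apply (hg.of_le (by norm_num))]
  simp only [Fin.prod_univ_three, Fin.prod_univ_two, Matrix.cons_val_zero, Matrix.cons_val_one,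
    Matrix.cons_val_two, Matrix.tail_cons, Matrix.head_cons]
  have hav : |⟪a, v⟫| ≤ M * ‖v‖ :=
    (abs_real_inner_le_norm a v).trans (mul_le_mul_of_nonneg_right ha (norm_nonneg v))
  have hM : 0 ≤ M * ‖v‖ := (abs_nonneg _).trans hav
  calc |⟪a, v⟫ * ⟪a, u⟫ * ⟪a, u⟫ * iteratedDeriv 3 g ⟪a, θ⟫|
      = ⟪a, u⟫ * ⟪a, u⟫ * (|⟪a, v⟫| * |iteratedDeriv 3 g ⟪a, θ⟫|) := by
        rw [abs_mul, abs_mul, abs_mul, ← abs_mul_abs_self ⟪a, u⟫]; ring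
    _ ≤ ⟪a, u⟫ * ⟪a, u⟫ * (M * ‖v‖ * (γ * iteratedDeriv 2 g ⟪a, θ⟫)) :=
        mul_le_mul_of_nonneg_left (mul_le_mul hav (hsc _) (abs_nonneg _) hM)
          (mul_self_nonneg _)
    _ = γ * M * (⟪a, u⟫ * ⟪a, u⟫ * iteratedDeriv 2 g ⟪a, θ⟫) * ‖v‖ := by ring

end SelfConcordant

theorem stmt_12_general {p : ℕ} (n : ℕ) (γ : ℝ)
    (y : Fin n → ℝ) (x : Fin n → EuclideanSpace ℝ (Fin p)) (w : Fin n → ℝ)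
    (hw : ∀ i, 0 ≤ w i)
    (ρ : ℝ → ℝ → ℝ)
    (hρC3 : ∀ a : ℝ, ContDiff ℝ 3 (ρ a))
    (hρSC : ∀ (a t : ℝ), |iteratedDeriv 3 (ρ a) t| ≤ γ * iteratedDeriv 2 (ρ a) t)
    (L : EuclideanSpace ℝ (Fin p) → ℝ)
    (hL : ∀ θ, L θ = (1 / (n : ℝ)) * ∑ i, ρ (y i) ⟪x i, θ⟫ * w i) :
    ∀ θ u v : EuclideanSpace ℝ (Fin p),
      |iteratedFDeriv ℝ 3 L θ ![v, u, u]| ≤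
        γ * (⨆ i, ‖x i‖) * iteratedFDeriv ℝ 2 L θ ![u, u] * ‖v‖ := by
  set g : Fin n → ℝ → ℝ := fun i t => 1 / (n : ℝ) * w i * ρ (y i) t
  have hc (i : Fin n) : 0 ≤ 1 / (n : ℝ) * w i := mul_nonneg (by positivity) (hw i)
  have hg (i : Fin n) : ContDiff ℝ 3 (g i) := contDiff_const.mul (hρC3 (y i))
  have hgsc (i : Fin n) (t : ℝ) : |iteratedDeriv 3 (g i) t| ≤ γ * iteratedDeriv 2 (g i) t := by
    simp only [g, iteratedDeriv_const_mul_field, abs_mul, abs_of_nonneg (hc i)]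
    linarith [mul_le_mul_of_nonneg_left (hρSC (y i) t) (hc i)]
  have hx (i : Fin n) : ‖x i‖ ≤ ⨆ j, ‖x j‖ :=
    le_ciSup (f := fun j => ‖x j‖) (Set.finite_range _).bddAbove i
  have hLg : L = fun θ => ∑ i, g i ⟪x i, θ⟫ := by
    funext θ
    rw [hL θ, Finset.mul_sum]
    exact Finset.sum_congr rfl fun i _ => by ring
  rw [hLg]
  exact SelfConcordant.sum (fun i => (hg i).comp (innerSL ℝ (x i)).contDiff)
    fun i => selfConcordant_comp_inner (hg i) (hgsc i) (hx i)

/-- if `t ↦ ρ(a,t)` is `(γ,2)`-self-concordant for every `a`, then the Mallows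
loss `L(θ) = (1/n) ∑ᵢ ρ(yᵢ, ⟨xᵢ,θ⟩) wᵢ` is `(γ maxᵢ ‖xᵢ‖, 2)`-self-concordant. -/
theorem stmt_12 {p : ℕ} (n : ℕ) (hn : 1 ≤ n) (γ : ℝ) (hγ : 0 < γ)
    (y : Fin n → ℝ) (x : Fin n → EuclideanSpace ℝ (Fin p)) (w : Fin n → ℝ)
    (hw : ∀ i, 0 ≤ w i)
    (ρ : ℝ → ℝ → ℝ)
    (hρC3 : ∀ a : ℝ, ContDiff ℝ 3 (ρ a))
    (hρSC : ∀ (a t : ℝ), |iteratedDeriv 3 (ρ a) t| ≤ γ * iteratedDeriv 2 (ρ a) t)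
    (L : EuclideanSpace ℝ (Fin p) → ℝ)
    (hL : ∀ θ, L θ = (1 / (n : ℝ)) * ∑ i, ρ (y i) ⟪x i, θ⟫ * w i) :
    ∀ θ u v : EuclideanSpace ℝ (Fin p),
      |iteratedFDeriv ℝ 3 L θ ![v, u, u]| ≤
        γ * (⨆ i, ‖x i‖) * iteratedFDeriv ℝ 2 L θ ![u, u] * ‖v‖ :=
  stmt_12_general n γ y x w hw ρ hρC3 hρSC L hL
end

section
/- Let n ≥ 1, γ > 0, C > 0, M > 0, let y₁, …, yₙ ∈ ℝ, x₁, …, xₙ ∈ ℝ^p, and let v₁, …, vₙ ≥ 0 be weights with ‖vᵢ xᵢ‖₂ ≤ C for every i. Let ρ : ℝ → ℝ be three times continuously differentiable with 0 ≤ ρ''(t) ≤ M and |ρ'''(t)| ≤ γ ρ''(t)^{3/2} for all t ∈ ℝ (i.e. ρ is (γ,3)-self-concordant with bounded second derivative). Define the Schweppe loss L(θ) = (1/n) Σᵢ ρ((yᵢ − ⟨xᵢ, θ⟩) vᵢ) for θ ∈ ℝ^p. Then L is (γC√M, 2)-self-concordant, i.e. |∇³L(θ)[v,u,u]| ≤ γC√M·(uᵀ∇²L(θ)u)·‖v‖₂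 for all θ, u, v ∈ ℝ^p. -/
open scoped RealInnerProductSpace

/-!
Each summand of `L` is `ρ` composed with the affine map `θ ↦ yᵢ vᵢ + ℓᵢ θ`, `ℓᵢ = ⟪-vᵢ xᵢ, ·⟫`,
so `∇ᵏL(θ)[m₁, …, mₖ]` is the average of `ρ⁽ᵏ⁾(tᵢ) ∏ⱼ ℓᵢ(mⱼ)`. In `∇³L(θ)[w, u, u]` bound
`|ℓᵢ w| ≤ C ‖w‖` and `|ρ'''| ≤ γ ρ''^{3/2} ≤ γ √M ρ''` term by term; what remains is the
average defining `∇²L(θ)[u, u]`.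
-/

section RidgeSum

variable {E : Type*} [NormedAddCommGroup E] [NormedSpace ℝ E] {N : WithTop ℕ∞} {k : ℕ}
  {f : ℝ → ℝ}

theorem iteratedFDeriv_comp_const_add_clm_apply (hf : ContDiff ℝ N f) (hk : (k : WithTop ℕ∞) ≤ N)
    (a : ℝ) (ℓ : E →L[ℝ] ℝ) (θ : E) (m : Fin k → E) :
    iteratedFDeriv ℝ k (fun θ => f (a + ℓ θ)) θ m =
      (∏ j, ℓ (m j)) * iteratedDeriv k f (a + ℓ θ) := by
  have hshift : ContDiff ℝ N (fun t => f (a + t)) := hf.comp (contDiff_const.add contDiff_id)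
  change iteratedFDeriv ℝ k ((fun t => f (a + t)) ∘ ℓ) θ m = _
  rw [ℓ.iteratedFDeriv_comp_right hshift θ hk,
    ContinuousMultilinearMap.compContinuousLinearMap_apply,
    iteratedFDeriv_apply_eq_iteratedDeriv_mul_prod, iteratedDeriv_comp_const_add, smul_eq_mul]

theorem iteratedFDeriv_const_mul_sum_comp_affine_apply {ι : Type*} (s : Finset ι)
    (hf : ContDiff ℝ N f) (hk : (k : WithTop ℕ∞) ≤ N) (c : ℝ) (a : ι → ℝ) (ℓ : ι → E →L[ℝ] ℝ)
    (θ : E) (m : Fin k → E) :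
    iteratedFDeriv ℝ k (fun θ => c * ∑ i ∈ s, f (a i + ℓ i θ)) θ m =
      c * ∑ i ∈ s, (∏ j, ℓ i (m j)) * iteratedDeriv k f (a i + ℓ i θ) := by
  have hterm : ∀ i, ContDiff ℝ k (fun θ => f (a i + ℓ i θ)) := fun i =>
    (hf.of_le hk).comp (contDiff_const.add (ℓ i).contDiff)
  have hsum : ContDiff ℝ k (fun θ => ∑ i ∈ s, f (a i + ℓ i θ)) :=
    ContDiff.sum fun i _ => hterm i
  change iteratedFDeriv ℝ k (fun θ => c • ∑ i ∈ s, f (a i + ℓ i θ)) θ m = _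
  rw [iteratedFDeriv_const_smul_apply' hsum.contDiffAt, smul_apply,
    iteratedFDeriv_fun_sum_apply fun i _ => (hterm i).contDiffAt,
    sum_apply, smul_eq_mul]
  simp only [iteratedFDeriv_comp_const_add_clm_apply hf hk]

end RidgeSum

theorem Finset.abs_sum_mul_mul_mul_le {ι : Type*} (s : Finset ι) {a b d e : ι → ℝ} {A K : ℝ}
    (ha : ∀ i ∈ s, |a i| ≤ A) (hd : ∀ i ∈ s, |d i| ≤ K * e i) :
    |∑ i ∈ s, a i * b i * b i * d i| ≤ A * K * ∑ i ∈ s, b i * b i * e i := by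
  rw [Finset.mul_sum]
  refine (Finset.abs_sum_le_sum_abs _ _).trans (Finset.sum_le_sum fun i hi => ?_)
  have hA : 0 ≤ A := (abs_nonneg _).trans (ha i hi)
  calc |a i * b i * b i * d i| = |a i| * (b i * b i) * |d i| := by
        rw [abs_mul, abs_mul, abs_mul, mul_assoc |a i|, abs_mul_abs_self]
    _ ≤ A * (b i * b i) * (K * e i) := by
        have := mul_self_nonneg (b i)
        gcongr
        exacts [ha i hi, hd i hi]
    _ = A * K * (b i * b i * e i) := by ring

theorem Real.rpow_three_halves_le_sqrt_mul {a M : ℝ} (ha : 0 ≤ a) (haM : a ≤ M) :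
    a ^ ((3 : ℝ) / 2) ≤ Real.sqrt M * a := by
  rcases ha.eq_or_lt with rfl | ha
  · rw [Real.zero_rpow (by norm_num), mul_zero]
  · rw [show (3 : ℝ) / 2 = 1 + 1 / 2 by norm_num, Real.rpow_add ha, Real.rpow_one,
      ← Real.sqrt_eq_rpow, mul_comm]
    exact mul_le_mul_of_nonneg_right (Real.sqrt_le_sqrt haM) ha.le

theorem stmt_14_general {p : ℕ} (n : ℕ) (γ C M : ℝ) (hγ : 0 < γ)
    (y : Fin n → ℝ) (x : Fin n → EuclideanSpace ℝ (Fin p)) (v : Fin n → ℝ)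
    (hvx : ∀ i, ‖v i • x i‖ ≤ C)
    (ρ : ℝ → ℝ) (hρC3 : ContDiff ℝ 3 ρ)
    (hρ'' : ∀ t : ℝ, 0 ≤ iteratedDeriv 2 ρ t ∧ iteratedDeriv 2 ρ t ≤ M)
    (hρSC : ∀ t : ℝ, |iteratedDeriv 3 ρ t| ≤ γ * iteratedDeriv 2 ρ t ^ ((3 : ℝ) / 2))
    (L : EuclideanSpace ℝ (Fin p) → ℝ)
    (hL : ∀ θ, L θ = (1 / (n : ℝ)) * ∑ i, ρ ((y i - ⟪x i, θ⟫) * v i)) :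
    ∀ θ u w : EuclideanSpace ℝ (Fin p),
      |iteratedFDeriv ℝ 3 L θ ![w, u, u]| ≤
        γ * C * Real.sqrt M * iteratedFDeriv ℝ 2 L θ ![u, u] * ‖w‖ := by
  set ℓ : Fin n → EuclideanSpace ℝ (Fin p) →L[ℝ] ℝ := fun i => innerSL ℝ (-(v i • x i))
  have hL_ridge : L = fun θ => (1 / (n : ℝ)) * ∑ i, ρ (y i * v i + ℓ i θ) := by
    funext θ
    simp only [hL, ℓ, innerSL_apply_apply, inner_neg_left, real_inner_smul_left]
    congr 2 with i
    ring_nf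
  have hℓ : ∀ i w, |ℓ i w| ≤ C * ‖w‖ := fun i w =>
    calc |ℓ i w| ≤ ‖-(v i • x i)‖ * ‖w‖ := abs_real_inner_le_norm (-(v i • x i)) w
      _ ≤ C * ‖w‖ := by rw [norm_neg]; gcongr; exact hvx i
  have hρ''' : ∀ t, |iteratedDeriv 3 ρ t| ≤ γ * Real.sqrt M * iteratedDeriv 2 ρ t := fun t =>
    (hρSC t).trans <| by
      rw [mul_assoc]
      exact mul_le_mul_of_nonneg_left
        (Real.rpow_three_halves_le_sqrt_mul (hρ'' t).1 (hρ'' t).2) hγ.le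
  intro θ u w
  rw [hL_ridge, iteratedFDeriv_const_mul_sum_comp_affine_apply _ hρC3 (by norm_num),
    iteratedFDeriv_const_mul_sum_comp_affine_apply _ hρC3 (by norm_num)]
  simp only [Fin.prod_univ_three, Fin.prod_univ_two, Matrix.cons_val_zero, Matrix.cons_val_one,
    Matrix.cons_val_two, Matrix.head_cons, Matrix.tail_cons]
  rw [abs_mul, abs_of_nonneg (by positivity)]
  calc _ ≤ 1 / (n : ℝ) * (C * ‖w‖ * (γ * Real.sqrt M) *
        ∑ i, ℓ i u * ℓ i u * iteratedDeriv 2 ρ (y i * v i + ℓ i θ)) := by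
        gcongr
        exact Finset.abs_sum_mul_mul_mul_le _ (fun i _ => hℓ i w) (fun i _ => hρ''' _)
    _ = _ := by ring

/-- if `ρ` is `(γ,3)`-self-concordant with second derivative bounded by `M`, and
the Schweppe weights satisfy `‖vᵢ xᵢ‖ ≤ C`, then the Schweppe loss
`L(θ) = (1/n) ∑ᵢ ρ((yᵢ - ⟨xᵢ,θ⟩) vᵢ)` is `(γ C √M, 2)`-self-concordant. -/
theorem stmt_14 {p : ℕ} (n : ℕ) (hn : 1 ≤ n) (γ C M : ℝ) (hγ : 0 < γ) (hC : 0 < C) (hM : 0 < M)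
    (y : Fin n → ℝ) (x : Fin n → EuclideanSpace ℝ (Fin p)) (v : Fin n → ℝ)
    (hv : ∀ i, 0 ≤ v i) (hvx : ∀ i, ‖v i • x i‖ ≤ C)
    (ρ : ℝ → ℝ) (hρC3 : ContDiff ℝ 3 ρ)
    (hρ'' : ∀ t : ℝ, 0 ≤ iteratedDeriv 2 ρ t ∧ iteratedDeriv 2 ρ t ≤ M)
    (hρSC : ∀ t : ℝ, |iteratedDeriv 3 ρ t| ≤ γ * iteratedDeriv 2 ρ t ^ ((3 : ℝ) / 2))
    (L : EuclideanSpace ℝ (Fin p) → ℝ)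
    (hL : ∀ θ, L θ = (1 / (n : ℝ)) * ∑ i, ρ ((y i - ⟪x i, θ⟫) * v i)) :
    ∀ θ u w : EuclideanSpace ℝ (Fin p),
      |iteratedFDeriv ℝ 3 L θ ![w, u, u]| ≤
        γ * C * Real.sqrt M * iteratedFDeriv ℝ 2 L θ ![u, u] * ‖w‖ :=
  stmt_14_general n γ C M hγ y x v hvx ρ hρC3 hρ'' hρSC L hL
end

section
/- Let γ > 0 and a ≥ 0 with 8γa ≤ 1/4, let K ∈ ℕ, and let λ₀, λ₁, …, λ_K be nonnegative real numbers such that λ_k ≤ 1/(16γ) for all 0 ≤ k ≤ K and λ_{k+1} ≤ 2γ(λ_k + a)² + e^{1/8}·a for all 0 ≤ k < K. Then for every 0 ≤ k ≤ K: 2γλ_k ≤ (2γλ₀)^{2^k} + 8γa. -/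
/-- the real-sequence recursion underlying the quadratic-convergence phase of the
noisy Newton method: if `λ_{k+1} ≤ 2γ(λ_k + a)² + e^{1/8} a` with `λ_k ≤ 1/(16γ)` and
`8γa ≤ 1/4`, then `2γλ_k ≤ (2γλ₀)^{2^k} + 8γa`. -/
theorem stmt_15 (γ a : ℝ) (hγ : 0 < γ) (ha : 0 ≤ a) (h8 : 8 * γ * a ≤ 1 / 4)
    (K : ℕ) (lam : ℕ → ℝ)
    (hnn : ∀ k ≤ K, 0 ≤ lam k)
    (hub : ∀ k ≤ K, lam k ≤ 1 / (16 * γ))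
    (hrec : ∀ k < K, lam (k + 1) ≤ 2 * γ * (lam k + a) ^ 2 + Real.exp (1 / 8) * a) :
    ∀ k ≤ K, 2 * γ * lam k ≤ (2 * γ * lam 0) ^ 2 ^ k + 8 * γ * a := by
  have hexp : Real.exp (1 / 8) ≤ 8 / 7 := by
    have h1 : (7 : ℝ) / 8 ≤ Real.exp (-(1 / 8)) := by
      have := Real.add_one_le_exp (-(1 / 8 : ℝ)); linarith
    have h2 : Real.exp (1 / 8) * Real.exp (-(1 / 8)) = 1 := by
      rw [← Real.exp_add]; norm_num
    have h3 := Real.exp_pos (1 / 8 : ℝ)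
    nlinarith
  have hμ0 : 0 ≤ 2 * γ * lam 0 := by
    have := hnn 0 (Nat.zero_le K); positivity
  have hμ8 : 2 * γ * lam 0 ≤ 1 / 8 := by
    have h := hub 0 (Nat.zero_le K)
    have := mul_le_mul_of_nonneg_left h (le_of_lt (by positivity : (0:ℝ) < 2 * γ))
    calc 2 * γ * lam 0 ≤ 2 * γ * (1 / (16 * γ)) := this
      _ = 1 / 8 := by field_simp; ring
  intro k hk
  induction k with
  | zero =>
    simp only [pow_zero, pow_one]
    nlinarith [hnn 0 (Nat.zero_le K)]
  | succ n ih =>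
    have hnK : n < K := hk
    have hn : n ≤ K := le_of_lt hnK
    have ihn := ih hn
    set c : ℝ := (2 * γ * lam 0) ^ 2 ^ n with hc
    have hc0 : 0 ≤ c := pow_nonneg hμ0 _
    have hc8 : c ≤ 1 / 8 := by
      calc c ≤ (1 / 8 : ℝ) ^ 2 ^ n := pow_le_pow_left₀ hμ0 hμ8 _
        _ ≤ (1 / 8 : ℝ) ^ 1 := by
            apply pow_le_pow_of_le_one (by norm_num) (by norm_num)
            exact Nat.one_le_two_pow
        _ = 1 / 8 := pow_one _
    have hcsq : (2 * γ * lam 0) ^ 2 ^ (n + 1) = c ^ 2 := by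
      rw [hc, pow_succ, pow_mul]
    rw [hcsq]
    have hlamn := hnn n hn
    have h1 : 2 * γ * lam (n + 1) ≤
        (2 * γ * lam n + 2 * γ * a) ^ 2 + Real.exp (1 / 8) * (2 * γ * a) := by
      have h := hrec n hnK
      nlinarith [mul_le_mul_of_nonneg_left h (le_of_lt (by positivity : (0:ℝ) < 2 * γ))]
    have h2 : 0 ≤ 2 * γ * lam n + 2 * γ * a := by positivity
    have h3 : 2 * γ * lam n + 2 * γ * a ≤ c + 10 * γ * a := by linarith
    have h4 : (2 * γ * lam n + 2 * γ * a) ^ 2 ≤ (c + 10 * γ * a) ^ 2 := by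
      nlinarith
    have hb0 : 0 ≤ 8 * γ * a := by positivity
    have he0 := Real.exp_pos (1 / 8 : ℝ)
    nlinarith [mul_nonneg (mul_nonneg hb0 hb0) hb0,
      mul_nonneg hb0 (sub_nonneg.2 hc8), mul_nonneg hb0 (sub_nonneg.2 h8),
      mul_nonneg hb0 (sub_nonneg.2 hexp)]
end

section
/- Define φ : ℝ → ℝ by φ(t) = log(e^{−t/2} + e^{t/2}). Then φ is infinitely differentiable, its second derivative satisfies φ''(t) > 0 for all t ∈ ℝ, and |φ'''(t)| ≤ φ''(t) for all t ∈ ℝ; that is, the logistic loss φ is (1,2)-self-concordant. -/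
/-!
Since `e^{-t/2} + e^{t/2} = 2 cosh (t/2)`, the logistic loss is `φ t = log 2 + log cosh (t/2)`, so
`φ' t = tanh (t/2) / 2`. As `tanh' = 1 - tanh²`, writing `τ = tanh (t/2) ∈ (-1, 1)` gives
`φ'' t = (1 - τ²) / 4 > 0` and `φ''' t = -τ (1 - τ²) / 4 = -τ φ'' t`, whence `|φ'''| ≤ φ''`.
-/

open Real
open scoped ContDiff

namespace Real

theorem hasDerivAt_tanh (x : ℝ) : HasDerivAt tanh (1 - tanh x ^ 2) x := by
  have h : HasDerivAt (fun y => sinh y / cosh y) _ x :=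
    (hasDerivAt_sinh x).div (hasDerivAt_cosh x) (cosh_pos x).ne'
  simp only [← tanh_eq_sinh_div_cosh] at h
  refine h.congr_deriv ?_
  rw [tanh_eq_sinh_div_cosh]
  field_simp

end Real

noncomputable def logisticLoss (t : ℝ) : ℝ := log (exp (-t / 2) + exp (t / 2))

theorem logisticLoss_eq_log_two_mul_cosh :
    logisticLoss = fun t => log (2 * cosh (t / 2)) := by
  funext t
  rw [logisticLoss, cosh_eq, neg_div]
  ring_nf

theorem contDiff_logisticLoss : ContDiff ℝ ∞ logisticLoss := by
  refine ContDiff.log (by fun_prop) fun t => ?_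
  positivity

theorem hasDerivAt_logisticLoss (t : ℝ) : HasDerivAt logisticLoss (tanh (t / 2) / 2) t := by
  rw [logisticLoss_eq_log_two_mul_cosh]
  refine ((((hasDerivAt_id' t).div_const 2).cosh.const_mul 2).log
    (mul_pos two_pos (cosh_pos (t / 2))).ne').congr_deriv ?_
  rw [tanh_eq_sinh_div_cosh]
  field_simp

theorem hasDerivAt_tanh_half (t : ℝ) :
    HasDerivAt (fun t => tanh (t / 2)) ((1 - tanh (t / 2) ^ 2) / 2) t := by
  refine ((hasDerivAt_tanh (t / 2)).comp t ((hasDerivAt_id' t).div_const 2)).congr_deriv ?_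
  ring

theorem iteratedDeriv_two_logisticLoss :
    iteratedDeriv 2 logisticLoss = fun t => (1 - tanh (t / 2) ^ 2) / 4 := by
  rw [iteratedDeriv_succ, iteratedDeriv_one, funext fun t => (hasDerivAt_logisticLoss t).deriv]
  funext t
  rw [((hasDerivAt_tanh_half t).div_const 2).deriv]
  ring

theorem iteratedDeriv_three_logisticLoss :
    iteratedDeriv 3 logisticLoss = fun t => -tanh (t / 2) * ((1 - tanh (t / 2) ^ 2) / 4) := by
  rw [iteratedDeriv_succ, iteratedDeriv_two_logisticLoss]
  funext t
  have h : HasDerivAt (fun t => (1 - tanh (t / 2) ^ 2) / 4) _ t :=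
    (((hasDerivAt_tanh_half t).pow 2).const_sub 1).div_const 4
  rw [h.deriv]
  ring

theorem iteratedDeriv_two_logisticLoss_pos (t : ℝ) : 0 < iteratedDeriv 2 logisticLoss t := by
  rw [iteratedDeriv_two_logisticLoss]
  exact div_pos (sub_pos.mpr (tanh_sq_lt_one _)) four_pos

theorem abs_iteratedDeriv_three_logisticLoss_le (t : ℝ) :
    |iteratedDeriv 3 logisticLoss t| ≤ iteratedDeriv 2 logisticLoss t := by
  have hpos := iteratedDeriv_two_logisticLoss_pos t
  simp only [iteratedDeriv_two_logisticLoss, iteratedDeriv_three_logisticLoss] at hpos ⊢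
  rw [abs_mul, abs_neg, abs_of_pos hpos]
  exact mul_le_of_le_one_left hpos.le (abs_tanh_lt_one _).le

/-- the logistic loss `φ(t) = log(e^{-t/2} + e^{t/2})` is infinitely
differentiable, has strictly positive second derivative, and satisfies `|φ'''| ≤ φ''`;
that is, it is `(1,2)`-self-concordant. -/
theorem stmt_18 :
    ContDiff ℝ (⊤ : ℕ∞) (fun t : ℝ => Real.log (Real.exp (-t / 2) + Real.exp (t / 2))) ∧
    (∀ t : ℝ,
      0 < iteratedDeriv 2 (fun t : ℝ => Real.log (Real.exp (-t / 2) + Real.exp (t / 2))) t) ∧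
    (∀ t : ℝ,
      |iteratedDeriv 3 (fun t : ℝ => Real.log (Real.exp (-t / 2) + Real.exp (t / 2))) t| ≤
        iteratedDeriv 2 (fun t : ℝ => Real.log (Real.exp (-t / 2) + Real.exp (t / 2))) t) :=
  ⟨contDiff_logisticLoss, iteratedDeriv_two_logisticLoss_pos,
    abs_iteratedDeriv_three_logisticLoss_le⟩
end
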